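/- arXiv:2602.07663 — 6 statements merged into one kernel-verified Lean document; each statement's English description precedes it below -/
import Mathlib

section
/- Let b ∈ ℝ^d have all components positive, let b_min denote its smallest component, fix P_max ≥ 2·R_max/b_min, and let 𝒫 = [0, P_max]^d. Then max over w in the probability simplex Δ_K of min over p ∈ 𝒫 of (⟨p, b⟩ + ∑_{θ=1}^K w_θ · g_θ(p)) equals min over p ∈ 𝒫 of (⟨p, b⟩ + max_{θ ∈ {1,…,K}} g_θ(p)). -/
/-!
For finitely many convex functions `f_θ` on a convex set `s` with `V = inf_{x ∈ s} max_θ f_θ x`,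
the convex set `{y | ∃ x ∈ s, ∀ θ, f_θ x ≤ y θ}` misses the open orthant `{y | ∀ θ, y θ < V}`.
A functional separating them is nonnegative on the coordinate vectors, so normalizing it gives
weights `w ∈ Δ_K` with `∑ w_θ f_θ ≥ V` on `s`; the reverse inequality is weak duality. Here
`f_θ p = ⟨p, b⟩ + g_θ p`, which is convex because the surplus is an average of the convex
functions `p ↦ (r - ⟨p, a⟩)₊`.
-/

open MeasureTheory

/-- Surplus function `g_θ(p) = E_{(r,a)∼D}[(r − ⟨p,a⟩)₊]`. -/
noncomputable def surplus {d : ℕ} (D : Measure (ℝ × (Fin d → ℝ))) (p : Fin d → ℝ) : ℝ :=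
  ∫ z, max (z.1 - ∑ i, p i * z.2 i) 0 ∂D

open Set

section ConvexMinimax

variable {ι E : Type*} [AddCommGroup E] [Module ℝ E]

lemma convex_setOf_exists_forall_le {s : Set E} {f : ι → E → ℝ} (hs : Convex ℝ s)
    (hf : ∀ i, ConvexOn ℝ s (f i)) : Convex ℝ {y : ι → ℝ | ∃ x ∈ s, ∀ i, f i x ≤ y i} := by
  rintro y ⟨x, hx, hxy⟩ z ⟨x', hx', hx'z⟩ a b ha hb hab
  refine ⟨a • x + b • x', hs hx hx' ha hb hab, fun i => ?_⟩
  calc f i (a • x + b • x') ≤ a * f i x + b * f i x' := (hf i).2 hx hx' ha hb hab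
    _ ≤ a * y i + b * z i := by gcongr <;> simp only [hxy, hx'z]
    _ = (a • y + b • z) i := rfl

variable [Fintype ι]

lemma nonneg_of_forall_sub_mul_lt {a c u : ℝ} (h : ∀ t, 0 ≤ t → a - t * c < u) : 0 ≤ c := by
  by_contra! hc
  have hau : a < u := by simpa using h 0 le_rfl
  have := h ((u - a) / -c) (div_nonneg (sub_nonneg.2 hau.le) (neg_nonneg.2 hc.le))
  rw [div_mul_eq_mul_div, div_neg, mul_div_assoc, div_self hc.ne, mul_one] at this
  linarith

lemma le_sum_mul_of_mem_stdSimplex {w a : ι → ℝ} {m : ℝ} (hw : w ∈ stdSimplex ℝ ι)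
    (ha : ∀ i, m ≤ a i) : m ≤ ∑ i, w i * a i :=
  calc m = ∑ i, w i * m := by rw [← Finset.sum_mul, hw.2, one_mul]
    _ ≤ ∑ i, w i * a i := Finset.sum_le_sum fun i _ => mul_le_mul_of_nonneg_left (ha i) (hw.1 i)

lemma sum_mul_le_of_mem_stdSimplex {w a : ι → ℝ} {M : ℝ} (hw : w ∈ stdSimplex ℝ ι)
    (ha : ∀ i, a i ≤ M) : ∑ i, w i * a i ≤ M :=
  calc ∑ i, w i * a i ≤ ∑ i, w i * M :=
        Finset.sum_le_sum fun i _ => mul_le_mul_of_nonneg_left (ha i) (hw.1 i)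
    _ = M := by rw [← Finset.sum_mul, hw.2, one_mul]

theorem exists_mem_stdSimplex_le_sum_mul {s : Set E} {f : ι → E → ℝ} {V : ℝ}
    (hs : s.Nonempty) (hf : ∀ i, ConvexOn ℝ s (f i)) (hV : ∀ x ∈ s, ∃ i, V ≤ f i x) :
    ∃ w ∈ stdSimplex ℝ ι, ∀ x ∈ s, V ≤ ∑ i, w i * f i x := by
  classical
  obtain ⟨x₀, hx₀⟩ := hs
  obtain ⟨i₀, -⟩ := hV x₀ hx₀
  set B : Set (ι → ℝ) := univ.pi fun _ => Iio V
  set C : Set (ι → ℝ) := {y | ∃ x ∈ s, ∀ i, f i x ≤ y i}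
  have hBC : Disjoint B C := by
    refine Set.disjoint_left.2 fun y hyB ⟨x, hx, hxy⟩ => ?_
    obtain ⟨i, hi⟩ := hV x hx
    exact (hi.trans (hxy i)).not_gt (hyB i (mem_univ i))
  obtain ⟨φ, u, hφB, hφC⟩ := geometric_hahn_banach_open (convex_pi fun _ _ => convex_Iio V)
    (isOpen_set_pi finite_univ fun _ _ => isOpen_Iio)
    (convex_setOf_exists_forall_le (hf i₀).1 hf) hBC
  set e : ι → ι → ℝ := fun i j => if i = j then 1 else 0
  set c : ι → ℝ := fun i => φ (e i)
  have hφ : ∀ y, φ y = ∑ i, y i * c i := (φ : (ι → ℝ) →ₗ[ℝ] ℝ).pi_apply_eq_sum_univ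
  have hφC' : ∀ x ∈ s, u ≤ ∑ i, f i x * c i := fun x hx =>
    hφ (fun i => f i x) ▸ hφC _ ⟨x, hx, fun _ => le_rfl⟩
  have hconst : ∀ t < V, (fun _ => t) ∈ B := fun t ht _ _ => ht
  have hφconst : ∀ t, φ (fun _ => t) = t * ∑ i, c i := by simp [hφ, Finset.mul_sum]
  -- `φ < u` on the ray `(V - 1, …, V - 1) - t • e i`, `t ≥ 0`, which lies in `B`
  have hc : ∀ i, 0 ≤ c i := fun i => nonneg_of_forall_sub_mul_lt fun t ht => by
    have hray : (fun _ => V - 1) - t • e i ∈ B := fun j _ => by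
      by_cases hij : i = j <;> simp [e, hij]; linarith
    simpa only [map_sub, map_smul, smul_eq_mul] using hφB _ hray
  have hS : 0 < ∑ i, c i := by
    refine (Finset.sum_nonneg fun i _ => hc i).lt_of_ne fun hS0 => ?_
    have hc0 : ∀ i, c i = 0 := fun i =>
      (Finset.sum_eq_zero_iff_of_nonneg fun i _ => hc i).1 hS0.symm i (Finset.mem_univ i)
    have h₁ := hφB _ (hconst (V - 1) (by linarith))
    have h₂ := hφC' x₀ hx₀
    simp only [hφconst, hc0, Finset.sum_const_zero, mul_zero] at h₁ h₂
    linarith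
  have hVu : V ≤ u / ∑ i, c i := le_of_forall_lt fun t ht =>
    (lt_div_iff₀ hS).2 (hφconst t ▸ hφB _ (hconst t ht))
  refine ⟨fun i => c i / ∑ j, c j,
    ⟨fun i => div_nonneg (hc i) hS.le, by rw [← Finset.sum_div, div_self hS.ne']⟩, fun x hx => ?_⟩
  calc V ≤ u / ∑ i, c i := hVu
    _ ≤ (∑ i, f i x * c i) / ∑ j, c j := by gcongr; exact hφC' x hx
    _ = ∑ i, c i / (∑ j, c j) * f i x := by
        rw [Finset.sum_div]
        exact Finset.sum_congr rfl fun i _ => by ring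

theorem sSup_sInf_add_sum_eq_sInf_add_sSup [Nonempty ι] {s : Set E} {h : E → ℝ}
    {g : ι → E → ℝ} {m n : ℝ} (hs : s.Nonempty) (hh : ConvexOn ℝ s h)
    (hg : ∀ i, ConvexOn ℝ s (g i)) (hh_bdd : ∀ x ∈ s, m ≤ h x)
    (hg_bdd : ∀ i, ∀ x ∈ s, n ≤ g i x) :
    sSup ((fun w => sInf ((fun x => h x + ∑ i, w i * g i x) '' s)) '' stdSimplex ℝ ι)
      = sInf ((fun x => h x + sSup (range fun i => g i x)) '' s) := by
  set V := sInf ((fun x => h x + sSup (range fun i => g i x)) '' s)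
  have hg_le : ∀ x i, g i x ≤ sSup (range fun i => g i x) := fun x i =>
    le_csSup (finite_range _).bddAbove ⟨i, rfl⟩
  have hV : ∀ x ∈ s, V ≤ h x + sSup (range fun i => g i x) := fun x hx =>
    csInf_le ⟨m + n, by
      rintro _ ⟨y, hy, rfl⟩
      exact add_le_add (hh_bdd y hy) ((hg_bdd (Classical.arbitrary ι) y hy).trans (hg_le y _))⟩
      (mem_image_of_mem _ hx)
  have hle : ∀ w ∈ stdSimplex ℝ ι, sInf ((fun x => h x + ∑ i, w i * g i x) '' s) ≤ V := by
    intro w hw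
    refine le_csInf (hs.image _) ?_
    rintro _ ⟨x, hx, rfl⟩
    refine (csInf_le ⟨m + n, ?_⟩ (mem_image_of_mem _ hx)).trans ?_
    · rintro _ ⟨y, hy, rfl⟩
      exact add_le_add (hh_bdd y hy) (le_sum_mul_of_mem_stdSimplex hw fun i => hg_bdd i y hy)
    · exact add_le_add le_rfl (sum_mul_le_of_mem_stdSimplex hw (hg_le x))
  obtain ⟨w, hw, hVw⟩ := exists_mem_stdSimplex_le_sum_mul hs (fun i => hh.add (hg i))
    fun x hx => by
      obtain ⟨i, hi⟩ := (range_nonempty fun i => g i x).csSup_mem (finite_range _)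
      exact ⟨i, hi ▸ hV x hx⟩
  have hVw' : V ≤ sInf ((fun x => h x + ∑ i, w i * g i x) '' s) := by
    refine le_csInf (hs.image _) ?_
    rintro _ ⟨x, hx, rfl⟩
    refine (hVw x hx).trans_eq ?_
    simp only [Pi.add_apply, mul_add, Finset.sum_add_distrib, ← Finset.sum_mul, hw.2, one_mul]
  refine le_antisymm (csSup_le (Set.image_nonempty.2 ⟨w, hw⟩) ?_) ?_
  · rintro _ ⟨w', hw', rfl⟩
    exact hle w' hw'
  · refine hVw'.trans (le_csSup ⟨V, ?_⟩ (mem_image_of_mem _ hw))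
    rintro _ ⟨w', hw', rfl⟩
    exact hle w' hw'

end ConvexMinimax

theorem convexOn_integral {α E : Type*} [MeasurableSpace α] {μ : Measure α} [AddCommGroup E]
    [Module ℝ E] {s : Set E} {F : E → α → ℝ} (hs : Convex ℝ s)
    (hF : ∀ x ∈ s, Integrable (F x) μ) (hconv : ∀ᵐ z ∂μ, ConvexOn ℝ s (F · z)) :
    ConvexOn ℝ s fun x => ∫ z, F x z ∂μ := by
  refine ⟨hs, fun x hx y hy a b ha hb hab => ?_⟩
  calc ∫ z, F (a • x + b • y) z ∂μ ≤ ∫ z, (a * F x z + b * F y z) ∂μ :=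
        integral_mono_ae (hF _ (hs hx hy ha hb hab))
          (((hF x hx).const_mul a).add ((hF y hy).const_mul b))
          (hconv.mono fun z hz => hz.2 hx hy ha hb hab)
    _ = a • ∫ z, F x z ∂μ + b • ∫ z, F y z ∂μ := by
        rw [integral_add ((hF x hx).const_mul a) ((hF y hy).const_mul b), integral_const_mul,
          integral_const_mul, smul_eq_mul, smul_eq_mul]

lemma convexOn_max_sub_sum_mul_zero {ι : Type*} [Fintype ι] (r : ℝ) (a : ι → ℝ) :
    ConvexOn ℝ univ fun p : ι → ℝ => max (r - ∑ i, p i * a i) 0 := by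
  let ℓ : (ι → ℝ) →ₗ[ℝ] ℝ := ∑ i, a i • LinearMap.proj i
  refine (((convexOn_const r convex_univ).sub (ℓ.concaveOn convex_univ)).sup
    (convexOn_const 0 convex_univ)).congr fun p _ => ?_
  simp [ℓ, mul_comm]

section Surplus

variable {d : ℕ} {D : Measure (ℝ × (Fin d → ℝ))}

lemma surplus_nonneg (p : Fin d → ℝ) : 0 ≤ surplus D p :=
  integral_nonneg fun _ => le_max_right _ _

lemma convexOn_surplus (h₁ : Integrable (fun z => z.1) D)
    (h₂ : ∀ i, Integrable (fun z => z.2 i) D) : ConvexOn ℝ univ (surplus D) :=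
  convexOn_integral convex_univ
    (fun p _ => (h₁.sub (integrable_finsetSum _ fun i _ => (h₂ i).const_mul (p i))).pos_part)
    (ae_of_all _ fun z => convexOn_max_sub_sum_mul_zero z.1 z.2)

end Surplus

theorem stmt0_general (K d : ℕ) (hK : 1 ≤ K)
    (Rmax Amax : ℝ) (hR : 0 < Rmax)
    (D : Fin K → Measure (ℝ × (Fin d → ℝ)))
    (hDp : ∀ θ, IsProbabilityMeasure (D θ))
    (hDs : ∀ θ, ∀ᵐ z ∂ D θ, 0 ≤ z.1 ∧ z.1 ≤ Rmax ∧ ∀ i, 0 ≤ z.2 i ∧ z.2 i ≤ Amax)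
    (b : Fin d → ℝ) (hb : ∀ i, 0 < b i)
    (bmin : ℝ) (hbmin : IsLeast (Set.range b) bmin)
    (Pmax : ℝ) (hP : 2 * Rmax / bmin ≤ Pmax) :
    sSup ((fun w => sInf ((fun p => (∑ i, p i * b i) + ∑ θ, w θ * surplus (D θ) p) ''
          {p : Fin d → ℝ | ∀ i, p i ∈ Set.Icc 0 Pmax})) ''
        {w : Fin K → ℝ | (∀ θ, 0 ≤ w θ) ∧ ∑ θ, w θ = 1})
      = sInf ((fun p => (∑ i, p i * b i) + sSup (Set.range fun θ => surplus (D θ) p)) ''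
          {p : Fin d → ℝ | ∀ i, p i ∈ Set.Icc 0 Pmax}) := by
  have : Nonempty (Fin K) := ⟨⟨0, hK⟩⟩
  have hPmax : 0 ≤ Pmax := by
    obtain ⟨i, rfl⟩ := hbmin.1
    exact le_trans (by have := hb i; positivity) hP
  have hbox : Convex ℝ {p : Fin d → ℝ | ∀ i, p i ∈ Icc 0 Pmax} :=
    fun _ hp _ hq _ _ hs ht hst i => convex_Icc 0 Pmax (hp i) (hq i) hs ht hst
  have hfst : ∀ θ, Integrable (fun z => z.1) (D θ) := fun θ =>
    .of_mem_Icc 0 Rmax measurable_fst.aemeasurable ((hDs θ).mono fun z hz => ⟨hz.1, hz.2.1⟩)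
  have hsnd : ∀ θ i, Integrable (fun z => z.2 i) (D θ) := fun θ i =>
    .of_mem_Icc 0 Amax ((measurable_pi_apply i).comp measurable_snd).aemeasurable
      ((hDs θ).mono fun z hz => hz.2.2 i)
  refine sSup_sInf_add_sum_eq_sInf_add_sSup ⟨0, fun _ => ⟨le_rfl, hPmax⟩⟩ ?_
    (fun θ => (convexOn_surplus (hfst θ) (hsnd θ)).subset (subset_univ _) hbox)
    (fun p hp => Finset.sum_nonneg fun i _ => mul_nonneg (hp i).1 (hb i).le)
    (fun θ p _ => surplus_nonneg p)
  exact ((∑ i, b i • LinearMap.proj i : (Fin d → ℝ) →ₗ[ℝ] ℝ).convexOn hbox).congr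
    fun p _ => by simp [mul_comm]

/-- minimax equality for the switching-aware fluid oracle:
`max_{w ∈ Δ_K} min_{p ∈ 𝒫} (⟨p,b⟩ + ∑_θ w_θ g_θ(p)) = min_{p ∈ 𝒫} (⟨p,b⟩ + max_θ g_θ(p))`,
where `𝒫 = [0, P_max]^d`, `b > 0` componentwise with smallest component `b_min`, and
`P_max ≥ 2 R_max / b_min`. -/
theorem stmt0 (K d : ℕ) (hK : 1 ≤ K) (hd : 1 ≤ d)
    (Rmax Amax : ℝ) (hR : 0 < Rmax) (hA : 0 < Amax)
    (D : Fin K → Measure (ℝ × (Fin d → ℝ)))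
    (hDp : ∀ θ, IsProbabilityMeasure (D θ))
    (hDs : ∀ θ, ∀ᵐ z ∂ D θ, 0 ≤ z.1 ∧ z.1 ≤ Rmax ∧ ∀ i, 0 ≤ z.2 i ∧ z.2 i ≤ Amax)
    (b : Fin d → ℝ) (hb : ∀ i, 0 < b i)
    (bmin : ℝ) (hbmin : IsLeast (Set.range b) bmin)
    (Pmax : ℝ) (hP : 2 * Rmax / bmin ≤ Pmax) :
    sSup ((fun w => sInf ((fun p => (∑ i, p i * b i) + ∑ θ, w θ * surplus (D θ) p) ''
          {p : Fin d → ℝ | ∀ i, p i ∈ Set.Icc 0 Pmax})) ''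
        {w : Fin K → ℝ | (∀ θ, 0 ≤ w θ) ∧ ∑ θ, w θ = 1})
      = sInf ((fun p => (∑ i, p i * b i) + sSup (Set.range fun θ => surplus (D θ) p)) ''
          {p : Fin d → ℝ | ∀ i, p i ∈ Set.Icc 0 Pmax}) :=
  stmt0_general K d hK Rmax Amax hR D hDp hDs b hb bmin hbmin Pmax hP
end

section
/- Assume additionally the no-tie condition: for all θ and all p ∈ 𝒫, D_θ({(r,a) : r = ⟨p,a⟩}) = 0; and assume P_max > R_max/b_min. Define L(w,p) := ⟨p,b⟩ + ∑_θ w_θ g_θ(p), H(w,p) := ∑_θ w_θ h_θ(p), and the active set A(p) := argmax_θ g_θ(p). Then a pair (w⋆, p⋆) ∈ Δ_K × 𝒫 is a saddle point of L (i.e. L(w, p⋆) ≤ L(w⋆, p⋆) ≤ L(w⋆, p) for all w ∈ Δ_K, p ∈ 𝒫) if and only if: (i) the support of w⋆ is contained in A(p⋆); (ii) H(w⋆, p⋆) ≤ b componentwise; (iii) ⟨p⋆, b − H(w⋆, p⋆)⟩ = 0. Moreover, for any such pair, ∑_θ w⋆_θ · E_{(r,a)∼D_θ}[r · 1{r > ⟨p⋆,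 a⟩}] = L(w⋆, p⋆). -/
open MeasureTheory

/-- Threshold consumption `h_θ(p) = E_{(r,a)∼D}[a · 1{r > ⟨p,a⟩}]`. -/
noncomputable def consumption {d : ℕ} (D : Measure (ℝ × (Fin d → ℝ))) (p : Fin d → ℝ) :
    Fin d → ℝ :=
  fun i => ∫ z, (if (∑ j, p j * z.2 j) < z.1 then z.2 i else 0) ∂D

/-!
Pointwise in `(r, a)`, the map `p ↦ (r - ⟨p, a⟩)₊` is convex with subgradient `-a · 1{r > ⟨p, a⟩}`,
so `-h_θ(p)` is a subgradient of `g_θ` at every `p`, and `b - H(w⋆, ·)` is a subgradient of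
`L(w⋆, ·)`. By the no-tie condition and dominated convergence, `H(w⋆, ·)` is continuous at `p⋆`.
Minimality of `p⋆` on the box is then equivalent to the KKT conditions: moving the `i`-th price up
(resp. down) and letting the step tend to `0` gives `H_i ≤ b_i` when `p⋆_i < P_max` (resp.
`H_i ≥ b_i` when `p⋆_i > 0`), while at `p⋆_i = P_max` the bound `p_i h_{θ,i}(p) ≤ R_max` gives
`P_max H_i ≤ R_max < P_max b_min`. Maximality of the linear map `w ↦ ∑ w_θ g_θ(p⋆)` on the simplex
means that `w⋆` is supported on its argmax. Finally
`r 1{r > ⟨p, a⟩} = (r - ⟨p, a⟩)₊ + ⟨p, a 1{r > ⟨p, a⟩}⟩`, and complementary slackness replaces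
`⟨p⋆, H(w⋆, p⋆)⟩` by `⟨p⋆, b⟩`.

The sums `∑ i, p i * a i` in `surplus` and `consumption` are `p ⬝ᵥ a` by definition.
-/

open Filter Topology Set

lemma max_sub_zero_sub_ite_le (r x y : ℝ) :
    max (r - x) 0 - (if x < r then y - x else 0) ≤ max (r - y) 0 := by
  split_ifs with h
  · rw [max_eq_left (sub_nonneg.2 h.le)]
    linarith [le_max_left (r - y) 0]
  · rw [max_eq_right (by linarith)]
    linarith [le_max_right (r - y) 0]

section Surplus

variable {d : ℕ} {μ : Measure (ℝ × (Fin d → ℝ))}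

lemma measurableSet_dotProduct_snd_lt_fst (p : Fin d → ℝ) :
    MeasurableSet {z : ℝ × (Fin d → ℝ) | p ⬝ᵥ z.2 < z.1} :=
  measurableSet_lt (continuous_const.dotProduct continuous_snd).measurable measurable_fst

lemma integrable_fst_snd_of_ae_bounded [IsFiniteMeasure μ] {R A : ℝ}
    (h : ∀ᵐ z ∂μ, 0 ≤ z.1 ∧ z.1 ≤ R ∧ ∀ i, 0 ≤ z.2 i ∧ z.2 i ≤ A) :
    Integrable Prod.fst μ ∧ ∀ i, Integrable (fun z => z.2 i) μ := by
  refine ⟨.of_bound measurable_fst.aestronglyMeasurable R ?_, fun i =>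
    .of_bound ((measurable_pi_apply i).comp measurable_snd).aestronglyMeasurable A ?_⟩ <;>
  filter_upwards [h] with z ⟨hr0, hrR, ha⟩
  · exact abs_le.2 ⟨by linarith, hrR⟩
  · exact abs_le.2 ⟨by linarith [ha i], (ha i).2⟩

lemma integrable_surplus_integrand (hr : Integrable Prod.fst μ)
    (ha : ∀ i, Integrable (fun z => z.2 i) μ) (p : Fin d → ℝ) :
    Integrable (fun z => max (z.1 - p ⬝ᵥ z.2) 0) μ := by
  have hdot : Integrable (fun z => p ⬝ᵥ z.2) μ :=
    integrable_finsetSum _ fun i _ => (ha i).const_mul (p i)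
  refine (hr.sub hdot).mono ?_ (ae_of_all _ fun z => ?_)
  · exact (measurable_fst.sub (continuous_const.dotProduct continuous_snd).measurable).max
      measurable_const |>.aestronglyMeasurable
  · simp only [Real.norm_eq_abs]
    exact abs_max_le_max_abs_abs.trans (by simp)

lemma integrable_consumption_integrand (ha : ∀ i, Integrable (fun z => z.2 i) μ)
    (p : Fin d → ℝ) (i : Fin d) :
    Integrable (fun z => if p ⬝ᵥ z.2 < z.1 then z.2 i else 0) μ :=
  (ha i).mono (((measurable_pi_apply i).comp measurable_snd).ite
    (measurableSet_dotProduct_snd_lt_fst p) measurable_const).aestronglyMeasurable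
    (ae_of_all _ fun z => by split_ifs <;> simp)

lemma integral_dotProduct_consumption_integrand (ha : ∀ i, Integrable (fun z => z.2 i) μ)
    (v p : Fin d → ℝ) :
    ∫ z, ∑ i, v i * (if p ⬝ᵥ z.2 < z.1 then z.2 i else 0) ∂μ = v ⬝ᵥ consumption μ p := by
  rw [integral_finsetSum _ fun i _ => (integrable_consumption_integrand ha p i).const_mul _]
  simp only [integral_const_mul]
  rfl

lemma surplus_sub_dotProduct_consumption_le (hr : Integrable Prod.fst μ)
    (ha : ∀ i, Integrable (fun z => z.2 i) μ) (p q : Fin d → ℝ) :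
    surplus μ p - (q - p) ⬝ᵥ consumption μ p ≤ surplus μ q := by
  have hint : Integrable (fun z => ∑ i, (q - p) i * (if p ⬝ᵥ z.2 < z.1 then z.2 i else 0)) μ :=
    integrable_finsetSum _ fun i _ => (integrable_consumption_integrand ha p i).const_mul _
  change ∫ z, max (z.1 - p ⬝ᵥ z.2) 0 ∂μ - _ ≤ ∫ z, max (z.1 - q ⬝ᵥ z.2) 0 ∂μ
  rw [← integral_dotProduct_consumption_integrand ha,
    ← integral_sub (integrable_surplus_integrand hr ha p) hint]
  refine integral_mono ((integrable_surplus_integrand hr ha p).sub hint)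
    (integrable_surplus_integrand hr ha q) fun z => ?_
  have hlin : ∑ i, (q - p) i * (if p ⬝ᵥ z.2 < z.1 then z.2 i else 0)
      = if p ⬝ᵥ z.2 < z.1 then q ⬝ᵥ z.2 - p ⬝ᵥ z.2 else 0 := by
    split_ifs
    · exact sub_dotProduct q p z.2
    · simp
  simpa only [hlin] using max_sub_zero_sub_ite_le z.1 (p ⬝ᵥ z.2) (q ⬝ᵥ z.2)

lemma continuousAt_consumption (ha : ∀ i, Integrable (fun z => z.2 i) μ) {p : Fin d → ℝ}
    (hnt : μ {z | z.1 = p ⬝ᵥ z.2} = 0) : ContinuousAt (consumption μ) p := by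
  refine continuousAt_pi.2 fun i => continuousAt_of_dominated
    (Eventually.of_forall fun q => (integrable_consumption_integrand ha q i).aestronglyMeasurable)
    (Eventually.of_forall fun q => ae_of_all _ fun z => ?_) (ha i).abs ?_
  · split_ifs <;> simp
  have hnt' : ∀ᵐ z ∂μ, z.1 ≠ p ⬝ᵥ z.2 := ae_iff.2 (by simpa using hnt)
  filter_upwards [hnt'] with z hz
  have hdot : Continuous fun q : Fin d → ℝ => q ⬝ᵥ z.2 := continuous_id.dotProduct continuous_const
  -- off the tie set, the threshold indicator is locally constant in the price
  rcases hz.lt_or_gt with hlt | hgt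
  · refine continuousAt_const.congr (f := fun _ => 0) ?_
    filter_upwards [hdot.continuousAt.eventually (lt_mem_nhds hlt)] with q hq
    exact (if_neg hq.not_gt).symm
  · refine continuousAt_const.congr (f := fun _ => z.2 i) ?_
    filter_upwards [hdot.continuousAt.eventually (gt_mem_nhds hgt)] with q hq
    exact (if_pos hq).symm

lemma mul_consumption_le [IsProbabilityMeasure μ] {R : ℝ}
    (hsupp : ∀ᵐ z ∂μ, 0 ≤ z.1 ∧ z.1 ≤ R ∧ 0 ≤ z.2) {p : Fin d → ℝ} (hp : 0 ≤ p) (i : Fin d) :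
    p i * consumption μ p i ≤ R := by
  rw [consumption, ← integral_const_mul]
  refine (integral_mono_of_nonneg ?_ (integrable_const R) ?_).trans_eq (by simp)
  · filter_upwards [hsupp] with z hz
    split_ifs <;> simp [mul_nonneg (hp i) (hz.2.2 i)]
  · filter_upwards [hsupp] with z ⟨hr0, hrR, ha⟩
    split_ifs with h
    · have : p i * z.2 i ≤ ∑ j, p j * z.2 j :=
        Finset.single_le_sum (fun j _ => mul_nonneg (hp j) (ha j)) (Finset.mem_univ i)
      linarith
    · simpa using hr0.trans hrR

lemma integral_revenue_eq (hr : Integrable Prod.fst μ)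
    (ha : ∀ i, Integrable (fun z => z.2 i) μ) (p : Fin d → ℝ) :
    ∫ z, (if p ⬝ᵥ z.2 < z.1 then z.1 else 0) ∂μ = surplus μ p + p ⬝ᵥ consumption μ p := by
  have hsplit : ∀ z : ℝ × (Fin d → ℝ), (if p ⬝ᵥ z.2 < z.1 then z.1 else 0)
      = max (z.1 - p ⬝ᵥ z.2) 0 + ∑ i, p i * (if p ⬝ᵥ z.2 < z.1 then z.2 i else 0) := by
    intro z
    split_ifs with h
    · rw [max_eq_left (sub_nonneg.2 h.le)]
      simp [dotProduct]
    · simp [max_eq_right (sub_nonpos.2 (not_lt.1 h))]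
  simp_rw [hsplit]
  rw [integral_add (integrable_surplus_integrand hr ha p)
      (integrable_finsetSum _ fun i _ => (integrable_consumption_integrand ha p i).const_mul _),
    integral_dotProduct_consumption_integrand ha]
  rfl

end Surplus

section Weighted

variable {ι : Type*} [Fintype ι] {d : ℕ} {D : ι → Measure (ℝ × (Fin d → ℝ))} {w : ι → ℝ}

lemma dotProduct_surplus_sub_dotProduct_consumption_le (hw : 0 ≤ w)
    (hr : ∀ θ, Integrable Prod.fst (D θ))
    (ha : ∀ θ i, Integrable (fun z => z.2 i) (D θ)) (p q : Fin d → ℝ) :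
    (w ⬝ᵥ fun θ => surplus (D θ) p) - (q - p) ⬝ᵥ ∑ θ, w θ • consumption (D θ) p
      ≤ w ⬝ᵥ fun θ => surplus (D θ) q := by
  rw [dotProduct_sum, dotProduct, dotProduct, ← Finset.sum_sub_distrib]
  refine Finset.sum_le_sum fun θ _ => ?_
  rw [dotProduct_smul, smul_eq_mul, ← mul_sub]
  exact mul_le_mul_of_nonneg_left (surplus_sub_dotProduct_consumption_le (hr θ) (ha θ) p q) (hw θ)

lemma continuousAt_sum_smul_consumption (ha : ∀ θ i, Integrable (fun z => z.2 i) (D θ))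
    {p : Fin d → ℝ} (hnt : ∀ θ, D θ {z | z.1 = p ⬝ᵥ z.2} = 0) :
    ContinuousAt (fun q => ∑ θ, w θ • consumption (D θ) q) p :=
  tendsto_finsetSum _ fun θ _ => (continuousAt_consumption (ha θ) (hnt θ)).const_smul (w θ)

lemma mul_sum_smul_consumption_le [∀ θ, IsProbabilityMeasure (D θ)] (hw : w ∈ stdSimplex ℝ ι)
    {R : ℝ} (hsupp : ∀ θ, ∀ᵐ z ∂D θ, 0 ≤ z.1 ∧ z.1 ≤ R ∧ 0 ≤ z.2) {p : Fin d → ℝ} (hp : 0 ≤ p)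
    (i : Fin d) : p i * (∑ θ, w θ • consumption (D θ) p) i ≤ R :=
  calc p i * (∑ θ, w θ • consumption (D θ) p) i
      = ∑ θ, w θ * (p i * consumption (D θ) p i) := by
        simp only [Finset.sum_apply, Pi.smul_apply, smul_eq_mul, Finset.mul_sum]
        exact Finset.sum_congr rfl fun θ _ => by ring
    _ ≤ ∑ θ, w θ * R := Finset.sum_le_sum fun θ _ =>
        mul_le_mul_of_nonneg_left (mul_consumption_le (hsupp θ) hp i) (hw.1 θ)
    _ = R := by rw [← Finset.sum_mul, hw.2, one_mul]

lemma sum_smul_consumption_apply_lt [∀ θ, IsProbabilityMeasure (D θ)] (hw : w ∈ stdSimplex ℝ ι)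
    {R c : ℝ} (hsupp : ∀ θ, ∀ᵐ z ∂D θ, 0 ≤ z.1 ∧ z.1 ≤ R ∧ 0 ≤ z.2) {p : Fin d → ℝ} (hp : 0 ≤ p)
    {i : Fin d} (hR : R < p i * c) : (∑ θ, w θ • consumption (D θ) p) i < c :=
  lt_of_mul_lt_mul_left ((mul_sum_smul_consumption_le hw hsupp hp i).trans_lt hR) (hp i)

lemma sum_mul_integral_revenue_eq (hr : ∀ θ, Integrable Prod.fst (D θ))
    (ha : ∀ θ i, Integrable (fun z => z.2 i) (D θ)) (p : Fin d → ℝ) :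
    ∑ θ, w θ * ∫ z, (if p ⬝ᵥ z.2 < z.1 then z.1 else 0) ∂D θ
      = (w ⬝ᵥ fun θ => surplus (D θ) p) + p ⬝ᵥ ∑ θ, w θ • consumption (D θ) p := by
  simp only [fun θ => integral_revenue_eq (hr θ) (ha θ) p, mul_add, Finset.sum_add_distrib,
    dotProduct_sum, dotProduct_smul, smul_eq_mul]
  rfl

end Weighted

lemma nonneg_of_eventually_nonneg_mul_nhdsGT {f : ℝ → ℝ} (hf : ContinuousAt f 0)
    (h : ∀ᶠ t in 𝓝[>] 0, 0 ≤ t * f t) : 0 ≤ f 0 :=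
  ge_of_tendsto (hf.tendsto.mono_left nhdsWithin_le_nhds) <|
    (h.and self_mem_nhdsWithin).mono fun _ ⟨h, ht⟩ => nonneg_of_mul_nonneg_right h ht

lemma nonpos_of_eventually_nonneg_mul_nhdsLT {f : ℝ → ℝ} (hf : ContinuousAt f 0)
    (h : ∀ᶠ t in 𝓝[<] 0, 0 ≤ t * f t) : f 0 ≤ 0 :=
  le_of_tendsto (hf.tendsto.mono_left nhdsWithin_le_nhds) <|
    (h.and self_mem_nhdsWithin).mono fun _ ⟨h, ht⟩ => nonpos_of_mul_nonneg_right h ht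

section Optimality

variable {n : Type*}

lemma add_single_mem_Icc [DecidableEq n] {p P : n → ℝ} (hp : p ∈ Icc 0 P) {i : n} {t : ℝ}
    (ht : t ∈ Icc (-p i) (P i - p i)) : p + Pi.single i t ∈ Icc 0 P := by
  refine ⟨fun j => ?_, fun j => ?_⟩ <;> rcases eq_or_ne j i with rfl | hj
  · simpa using neg_le_iff_add_nonneg'.1 ht.1
  · simpa [hj] using hp.1 j
  · simpa using le_sub_iff_add_le'.1 ht.2
  · simpa [hj] using hp.2 j

variable [Fintype n]

lemma isMaxOn_dotProduct_stdSimplex_iff {v w : n → ℝ} (hw : w ∈ stdSimplex ℝ n) :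
    IsMaxOn (fun x => x ⬝ᵥ v) (stdSimplex ℝ n) w ↔ ∀ i, 0 < w i → ∀ j, v j ≤ v i := by
  classical
  constructor
  · intro hmax i hi j
    obtain ⟨k, -, hk⟩ := Finset.exists_max_image Finset.univ v ⟨i, Finset.mem_univ i⟩
    by_contra! hlt
    have hlt_max : w ⬝ᵥ v < v k :=
      calc w ⬝ᵥ v < ∑ l, w l * v k :=
            Finset.sum_lt_sum
              (fun l _ => mul_le_mul_of_nonneg_left (hk l (Finset.mem_univ l)) (hw.1 l))
              ⟨i, Finset.mem_univ i,
                mul_lt_mul_of_pos_left (hlt.trans_le (hk j (Finset.mem_univ j))) hi⟩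
        _ = v k := by rw [← Finset.sum_mul, hw.2, one_mul]
    have hk_le := isMaxOn_iff.1 hmax _ (single_mem_stdSimplex ℝ k)
    rw [single_dotProduct, one_mul] at hk_le
    exact hlt_max.not_ge hk_le
  · intro hsupp
    obtain ⟨i, -, hi⟩ := Finset.exists_lt_of_sum_lt (f := 0) (g := w) (s := Finset.univ)
      (by simp [hw.2])
    have hwv : w ⬝ᵥ v = v i :=
      calc w ⬝ᵥ v = ∑ j, w j * v i := Finset.sum_congr rfl fun j _ => by
            rcases (hw.1 j).eq_or_lt with h | h
            · simp [← h]
            · rw [le_antisymm (hsupp j h i) (hsupp i hi j)]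
        _ = v i := by rw [← Finset.sum_mul, hw.2, one_mul]
    refine isMaxOn_iff.2 fun x hx => ?_
    calc x ⬝ᵥ v ≤ ∑ j, x j * v i :=
          Finset.sum_le_sum fun j _ => mul_le_mul_of_nonneg_left (hsupp i hi j) (hx.1 j)
      _ = w ⬝ᵥ v := by rw [← Finset.sum_mul, hx.2, one_mul, hwv]

variable {G : (n → ℝ) → ℝ} {ψ : (n → ℝ) → n → ℝ} {b P p : n → ℝ}

lemma kkt_of_isMinOn_Icc (hmin : IsMinOn (fun q => q ⬝ᵥ b + G q) (Icc 0 P) p)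
    (hsub : ∀ q ∈ Icc 0 P, G q - (p - q) ⬝ᵥ ψ q ≤ G p) (hψ : ContinuousAt ψ p)
    (hp : p ∈ Icc 0 P) (i : n) :
    (p i < P i → ψ p i ≤ b i) ∧ (0 < p i → b i ≤ ψ p i) := by
  classical
  set f : ℝ → ℝ := fun t => b i - ψ (p + Pi.single i t) i
  have hf0 : f 0 = b i - ψ p i := by simp [f]
  have hf : ContinuousAt f 0 := by
    have hline : ContinuousAt (fun t : ℝ => p + Pi.single i t) 0 :=
      (continuous_const.add (continuous_single i)).continuousAt
    have hψ' : ContinuousAt ψ (p + Pi.single i 0) := by simpa using hψ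
    exact continuousAt_const.sub
      ((continuous_apply i).continuousAt.comp (hψ'.comp (f := fun t => p + Pi.single i t) hline))
  have hmul : ∀ t ∈ Icc (-p i) (P i - p i), 0 ≤ t * f t := by
    intro t ht
    have hq := add_single_mem_Icc hp ht
    have h1 := isMinOn_iff.1 hmin _ hq
    have h2 := hsub _ hq
    simp only [add_dotProduct, sub_add_cancel_left, neg_dotProduct, single_dotProduct] at h1 h2
    simp only [f, mul_sub]
    linarith
  refine ⟨fun hi => ?_, fun hi => ?_⟩
  · have := nonneg_of_eventually_nonneg_mul_nhdsGT hf <|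
      mem_of_superset (Ioo_mem_nhdsGT (sub_pos.2 hi)) fun t ht =>
        hmul t ⟨(neg_nonpos.2 (hp.1 i)).trans ht.1.le, ht.2.le⟩
    linarith
  · have := nonpos_of_eventually_nonneg_mul_nhdsLT hf <|
      mem_of_superset (Ioo_mem_nhdsLT (neg_lt_zero.2 hi)) fun t ht =>
        hmul t ⟨ht.1.le, by linarith [ht.2, hp.2 i]⟩
    linarith

lemma isMinOn_Icc_of_kkt (hsub : ∀ q ∈ Icc 0 P, G p - (q - p) ⬝ᵥ ψ p ≤ G q) (hle : ψ p ≤ b)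
    (hslack : p ⬝ᵥ (b - ψ p) = 0) : IsMinOn (fun q => q ⬝ᵥ b + G q) (Icc 0 P) p :=
  isMinOn_iff.2 fun q hq => by
    have h1 := hsub q hq
    have h2 : 0 ≤ q ⬝ᵥ (b - ψ p) := dotProduct_nonneg_of_nonneg hq.1 (sub_nonneg.2 hle)
    simp only [dotProduct_sub, sub_dotProduct] at h1 h2 hslack ⊢
    linarith

theorem isMinOn_Icc_iff_kkt (hsub : ∀ x ∈ Icc 0 P, ∀ y ∈ Icc 0 P, G x - (y - x) ⬝ᵥ ψ x ≤ G y)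
    (hψ : ContinuousAt ψ p) (hp : p ∈ Icc 0 P) (hP : ∀ i, p i = P i → ψ p i ≤ b i) :
    IsMinOn (fun q => q ⬝ᵥ b + G q) (Icc 0 P) p ↔ ψ p ≤ b ∧ p ⬝ᵥ (b - ψ p) = 0 := by
  refine ⟨fun hmin => ?_, fun ⟨hle, hslack⟩ => isMinOn_Icc_of_kkt (hsub p hp) hle hslack⟩
  have hkkt := kkt_of_isMinOn_Icc hmin (fun q hq => hsub q hq p hp) hψ hp
  have hle : ψ p ≤ b := fun i => (hp.2 i).lt_or_eq.elim (hkkt i).1 (hP i)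
  refine ⟨hle, Finset.sum_eq_zero fun i _ => ?_⟩
  rcases (hp.1 i).eq_or_lt with h | h
  · simp [← h]
  · rw [Pi.sub_apply, le_antisymm (hle i) ((hkkt i).2 h), sub_self, mul_zero]

end Optimality

theorem stmt1_general (K d : ℕ)
    (Rmax Amax : ℝ)
    (D : Fin K → Measure (ℝ × (Fin d → ℝ)))
    (hDp : ∀ θ, IsProbabilityMeasure (D θ))
    (hDs : ∀ θ, ∀ᵐ z ∂ D θ, 0 ≤ z.1 ∧ z.1 ≤ Rmax ∧ ∀ i, 0 ≤ z.2 i ∧ z.2 i ≤ Amax)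
    (b : Fin d → ℝ) (hb : ∀ i, 0 < b i)
    (bmin : ℝ) (hbmin : IsLeast (Set.range b) bmin)
    (Pmax : ℝ) (hP : Rmax / bmin < Pmax)
    (hnotie : ∀ θ, ∀ p : Fin d → ℝ, (∀ i, p i ∈ Set.Icc 0 Pmax) →
      D θ {z | z.1 = ∑ i, p i * z.2 i} = 0)
    (L : (Fin K → ℝ) → (Fin d → ℝ) → ℝ)
    (hL : ∀ w p, L w p = (∑ i, p i * b i) + ∑ θ, w θ * surplus (D θ) p)
    (H : (Fin K → ℝ) → (Fin d → ℝ) → Fin d → ℝ)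
    (hH : ∀ w p i, H w p i = ∑ θ, w θ * consumption (D θ) p i)
    (wstar : Fin K → ℝ) (hw : (∀ θ, 0 ≤ wstar θ) ∧ ∑ θ, wstar θ = 1)
    (pstar : Fin d → ℝ) (hpP : ∀ i, pstar i ∈ Set.Icc 0 Pmax) :
    (((∀ w : Fin K → ℝ, (∀ θ, 0 ≤ w θ) ∧ ∑ θ, w θ = 1 → L w pstar ≤ L wstar pstar) ∧
      (∀ p : Fin d → ℝ, (∀ i, p i ∈ Set.Icc 0 Pmax) → L wstar pstar ≤ L wstar p))
      ↔
      ((∀ θ, 0 < wstar θ → ∀ θ', surplus (D θ') pstar ≤ surplus (D θ) pstar) ∧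
       (∀ i, H wstar pstar i ≤ b i) ∧
       (∑ i, pstar i * (b i - H wstar pstar i)) = 0))
    ∧
    (((∀ w : Fin K → ℝ, (∀ θ, 0 ≤ w θ) ∧ ∑ θ, w θ = 1 → L w pstar ≤ L wstar pstar) ∧
      (∀ p : Fin d → ℝ, (∀ i, p i ∈ Set.Icc 0 Pmax) → L wstar pstar ≤ L wstar p)) →
      (∑ θ, wstar θ * ∫ z, (if (∑ i, pstar i * z.2 i) < z.1 then z.1 else 0) ∂ D θ)
        = L wstar pstar) := by
  have hr θ := (integrable_fst_snd_of_ae_bounded (hDs θ)).1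
  have ha θ := (integrable_fst_snd_of_ae_bounded (hDs θ)).2
  set Ψ : (Fin d → ℝ) → Fin d → ℝ := fun q => ∑ θ, wstar θ • consumption (D θ) q
  have hHΨ : H wstar pstar = Ψ pstar := funext fun i => by simp [hH, Ψ, Finset.sum_apply]
  have hbox : ∀ q : Fin d → ℝ, q ∈ Icc 0 (fun _ => Pmax) ↔ ∀ i, q i ∈ Icc 0 Pmax := fun q => by
    simp only [Set.mem_Icc, Pi.le_def, Pi.zero_apply, forall_and]
  have hRb : Rmax < Pmax * bmin := by
    obtain ⟨i0, rfl⟩ := hbmin.1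
    exact (div_lt_iff₀ (hb i0)).1 hP
  have hbdry : ∀ i, pstar i = Pmax → Ψ pstar i ≤ b i := fun i hi =>
    (sum_smul_consumption_apply_lt hw
      (fun θ => (hDs θ).mono fun z hz => ⟨hz.1, hz.2.1, fun j => (hz.2.2 j).1⟩)
      (fun j => (hpP j).1) (by rwa [hi])).le.trans (hbmin.2 ⟨i, rfl⟩)
  have hwside : (∀ w : Fin K → ℝ, (∀ θ, 0 ≤ w θ) ∧ ∑ θ, w θ = 1 → L w pstar ≤ L wstar pstar) ↔
      ∀ θ, 0 < wstar θ → ∀ θ', surplus (D θ') pstar ≤ surplus (D θ) pstar := by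
    rw [← isMaxOn_dotProduct_stdSimplex_iff hw, isMaxOn_iff]
    simp only [hL]
    exact forall₂_congr fun w _ => add_le_add_iff_left _
  have hpside : (∀ p : Fin d → ℝ, (∀ i, p i ∈ Icc 0 Pmax) → L wstar pstar ≤ L wstar p) ↔
      (∀ i, H wstar pstar i ≤ b i) ∧ ∑ i, pstar i * (b i - H wstar pstar i) = 0 := by
    have hkkt := isMinOn_Icc_iff_kkt (G := fun q => wstar ⬝ᵥ fun θ => surplus (D θ) q)
      (fun x _ y _ => dotProduct_surplus_sub_dotProduct_consumption_le hw.1 hr ha x y)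
      (continuousAt_sum_smul_consumption ha fun θ => hnotie θ pstar hpP) ((hbox pstar).2 hpP)
      hbdry
    rw [isMinOn_iff] at hkkt
    simp only [hbox, hL, hHΨ] at hkkt ⊢
    exact hkkt
  refine ⟨and_congr hwside hpside, fun hsaddle => ?_⟩
  have hslack : pstar ⬝ᵥ (b - Ψ pstar) = 0 := hHΨ ▸ ((and_congr hwside hpside).1 hsaddle).2.2
  refine (sum_mul_integral_revenue_eq hr ha pstar).trans ?_
  rw [dotProduct_sub] at hslack
  rw [hL]
  change _ = pstar ⬝ᵥ b + (wstar ⬝ᵥ fun θ => surplus (D θ) pstar)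
  linarith

/-- primal–dual (saddle/KKT) optimality conditions.  Under the no-tie
condition and `P_max > R_max / b_min`, a pair `(w⋆, p⋆) ∈ Δ_K × 𝒫` is a saddle point of
`L(w,p) = ⟨p,b⟩ + ∑_θ w_θ g_θ(p)` iff (i) `supp(w⋆) ⊆ argmax_θ g_θ(p⋆)`,
(ii) `H(w⋆,p⋆) ≤ b` componentwise, and (iii) `⟨p⋆, b − H(w⋆,p⋆)⟩ = 0`.  Moreover any such
pair satisfies `∑_θ w⋆_θ E_θ[r·1{r > ⟨p⋆,a⟩}] = L(w⋆,p⋆)`. -/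
theorem stmt1 (K d : ℕ) (hK : 1 ≤ K) (hd : 1 ≤ d)
    (Rmax Amax : ℝ) (hR : 0 < Rmax) (hA : 0 < Amax)
    (D : Fin K → Measure (ℝ × (Fin d → ℝ)))
    (hDp : ∀ θ, IsProbabilityMeasure (D θ))
    (hDs : ∀ θ, ∀ᵐ z ∂ D θ, 0 ≤ z.1 ∧ z.1 ≤ Rmax ∧ ∀ i, 0 ≤ z.2 i ∧ z.2 i ≤ Amax)
    (b : Fin d → ℝ) (hb : ∀ i, 0 < b i)
    (bmin : ℝ) (hbmin : IsLeast (Set.range b) bmin)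
    (Pmax : ℝ) (hP : Rmax / bmin < Pmax)
    (hnotie : ∀ θ, ∀ p : Fin d → ℝ, (∀ i, p i ∈ Set.Icc 0 Pmax) →
      D θ {z | z.1 = ∑ i, p i * z.2 i} = 0)
    (L : (Fin K → ℝ) → (Fin d → ℝ) → ℝ)
    (hL : ∀ w p, L w p = (∑ i, p i * b i) + ∑ θ, w θ * surplus (D θ) p)
    (H : (Fin K → ℝ) → (Fin d → ℝ) → Fin d → ℝ)
    (hH : ∀ w p i, H w p i = ∑ θ, w θ * consumption (D θ) p i)
    (wstar : Fin K → ℝ) (hw : (∀ θ, 0 ≤ wstar θ) ∧ ∑ θ, wstar θ = 1)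
    (pstar : Fin d → ℝ) (hpP : ∀ i, pstar i ∈ Set.Icc 0 Pmax) :
    (((∀ w : Fin K → ℝ, (∀ θ, 0 ≤ w θ) ∧ ∑ θ, w θ = 1 → L w pstar ≤ L wstar pstar) ∧
      (∀ p : Fin d → ℝ, (∀ i, p i ∈ Set.Icc 0 Pmax) → L wstar pstar ≤ L wstar p))
      ↔
      ((∀ θ, 0 < wstar θ → ∀ θ', surplus (D θ') pstar ≤ surplus (D θ) pstar) ∧
       (∀ i, H wstar pstar i ≤ b i) ∧
       (∑ i, pstar i * (b i - H wstar pstar i)) = 0))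
    ∧
    (((∀ w : Fin K → ℝ, (∀ θ, 0 ≤ w θ) ∧ ∑ θ, w θ = 1 → L w pstar ≤ L wstar pstar) ∧
      (∀ p : Fin d → ℝ, (∀ i, p i ∈ Set.Icc 0 Pmax) → L wstar pstar ≤ L wstar p)) →
      (∑ θ, wstar θ * ∫ z, (if (∑ i, pstar i * z.2 i) < z.1 then z.1 else 0) ∂ D θ)
        = L wstar pstar) :=
  stmt1_general K d Rmax Amax D hDp hDs b hb bmin hbmin Pmax hP hnotie L hL H hH wstar hw pstar hpP
end

section
/- Let (Ω, ℱ, ℙ) be a probability space carrying, for each t = 1,…,T, random variables θ_t with values in {1,…,K}, (r_t, a_t) with values in [0,R_max] × [0,A_max]^d, and x_t with values in {0,1}, such that for every t and every θ with ℙ(θ_t = θ) > 0, the law of (r_t, a_t) under the conditional probability measure ℙ(· | θ_t = θ) equals D_θ. If ∑_{t=1}^T a_t x_t ≤ T·b componentwise almost surely, then E[∑_{t=1}^T r_t x_t] ≤ T · V^mix(b), where V^mix(b) := min_{p ∈ 𝒫} { ⟨p, b⟩ + max_θ g_θ(p) }. -/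
open MeasureTheory

/-!
Lagrangian weak duality. For a price vector `p ≥ 0` and `x ∈ [0, 1]` one has
`r x ≤ (r - ⟨p, a⟩)₊ + ⟨p, a⟩ x`; summing over the rounds and using the budget constraint bounds the
total reward pathwise by `∑_t (r_t - ⟨p, a_t⟩)₊ + T ⟨p, b⟩`. Conditioning on `θ_t`, the expectation
of the `t`-th surplus term is a convex combination of the `g_θ(p)`, hence at most `max_θ g_θ(p)`.
It remains to minimize over `p ∈ 𝒫`, which is nonempty because `P_max ≥ 0`.
-/

open ProbabilityTheory

namespace ProbabilityTheory

variable {Ω α : Type*} [MeasurableSpace Ω] {μ : Measure Ω} {s : Set Ω}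

theorem smul_cond_le (hs : MeasurableSet s) [IsFiniteMeasure μ] : μ s • μ[|s] ≤ μ :=
  Measure.le_iff'.2 fun t => by
    rw [Measure.smul_apply, smul_eq_mul, mul_comm, cond_mul_eq_inter hs]
    exact measure_mono Set.inter_subset_right

variable [Fintype α] [MeasurableSpace α] [DiscreteMeasurableSpace α] [IsProbabilityMeasure μ]

theorem integral_le_of_forall_integral_cond_le {X : Ω → α} (hX : Measurable X) {Y : Ω → ℝ}
    (hY : Integrable Y μ) {M : ℝ} (hM : ∀ x, μ (X ⁻¹' {x}) ≠ 0 → ∫ ω, Y ω ∂μ[|X ⁻¹' {x}] ≤ M) :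
    ∫ ω, Y ω ∂μ ≤ M := by
  conv_lhs => rw [← sum_meas_smul_cond_fiber hX μ]
  rw [integral_finsetSum_measure fun x _ => hY.mono_measure (smul_cond_le (hX (.singleton x)))]
  calc ∑ x, ∫ ω, Y ω ∂(μ (X ⁻¹' {x}) • μ[|X ⁻¹' {x}])
      ≤ ∑ x, μ.real (X ⁻¹' {x}) * M := by
        refine Finset.sum_le_sum fun x _ => ?_
        rw [integral_smul_measure, smul_eq_mul]
        by_cases hx : μ (X ⁻¹' {x}) = 0
        · simp [hx, measureReal_def]
        · exact mul_le_mul_of_nonneg_left (hM x hx) ENNReal.toReal_nonneg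
    _ = M := by
        rw [← Finset.sum_mul, sum_measureReal_preimage_singleton _ fun x _ => hX (.singleton x)]
        simp

theorem integral_comp_le_iSup_of_map_cond_eq {E : Type*} [MeasurableSpace E] {X : Ω → α}
    (hX : Measurable X) {Z : Ω → E} (hZ : Measurable Z) {g : E → ℝ} (hg : Measurable g)
    (hgZ : Integrable (fun ω => g (Z ω)) μ) {D : α → Measure E}
    (hlaw : ∀ x, μ (X ⁻¹' {x}) ≠ 0 → (μ[|X ⁻¹' {x}]).map Z = D x) :
    ∫ ω, g (Z ω) ∂μ ≤ ⨆ x, ∫ z, g z ∂D x := by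
  refine integral_le_of_forall_integral_cond_le hX hgZ fun x hx => ?_
  calc ∫ ω, g (Z ω) ∂μ[|X ⁻¹' {x}] = ∫ z, g z ∂D x := by
        rw [← hlaw x hx, integral_map hZ.aemeasurable hg.aestronglyMeasurable]
    _ ≤ ⨆ x, ∫ z, g z ∂D x := le_ciSup (Set.finite_range fun x => ∫ z, g z ∂D x).bddAbove x

end ProbabilityTheory

theorem mul_le_max_sub_zero_add_mul {r c x : ℝ} (hx : x ∈ Set.Icc 0 1) :
    r * x ≤ max (r - c) 0 + c * x := by
  nlinarith [mul_nonneg (sub_nonneg.2 (le_max_left (r - c) 0)) hx.1,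
    mul_nonneg (le_max_right (r - c) 0) (sub_nonneg.2 hx.2)]

section surplusIntegrand

variable {d : ℕ}

def surplusIntegrand (p : Fin d → ℝ) (z : ℝ × (Fin d → ℝ)) : ℝ :=
  max (z.1 - ∑ i, p i * z.2 i) 0

theorem measurable_surplusIntegrand (p : Fin d → ℝ) : Measurable (surplusIntegrand p) := by
  unfold surplusIntegrand; fun_prop

theorem surplusIntegrand_nonneg (p : Fin d → ℝ) (z : ℝ × (Fin d → ℝ)) :
    0 ≤ surplusIntegrand p z :=
  le_max_right _ _

theorem surplusIntegrand_le {p : Fin d → ℝ} (hp : 0 ≤ p) {z : ℝ × (Fin d → ℝ)} (hz : 0 ≤ z.2) :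
    surplusIntegrand p z ≤ max z.1 0 :=
  max_le_max_right 0 <| sub_le_self _ <| Finset.sum_nonneg fun i _ => mul_nonneg (hp i) (hz i)

open Finset in
theorem sum_mul_le_sum_surplusIntegrand_add {ι : Type*} [Fintype ι] (r : ι → ℝ)
    (a : ι → Fin d → ℝ) {x : ι → ℝ} (hx : ∀ t, x t ∈ Set.Icc 0 1) {p : Fin d → ℝ} (hp : 0 ≤ p)
    {B : Fin d → ℝ} (hB : ∀ i, ∑ t, a t i * x t ≤ B i) :
    ∑ t, r t * x t ≤ ∑ t, surplusIntegrand p (r t, a t) + ∑ i, p i * B i :=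
  calc ∑ t, r t * x t
      ≤ ∑ t, (surplusIntegrand p (r t, a t) + (∑ i, p i * a t i) * x t) :=
        sum_le_sum fun t _ => mul_le_max_sub_zero_add_mul (hx t)
    _ = ∑ t, surplusIntegrand p (r t, a t) + ∑ i, p i * ∑ t, a t i * x t := by
        simp_rw [sum_add_distrib, sum_mul, mul_sum, mul_assoc]
        rw [sum_comm]
    _ ≤ ∑ t, surplusIntegrand p (r t, a t) + ∑ i, p i * B i := by
        gcongr with i
        · exact hp i
        · exact hB i

end surplusIntegrand

theorem integral_sum_mul_le_mul_add_iSup_surplus {Ω : Type*} [MeasurableSpace Ω] {μ : Measure Ω}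
    [IsProbabilityMeasure μ] {K T d : ℕ} {D : Fin K → Measure (ℝ × (Fin d → ℝ))}
    {θt : Fin T → Ω → Fin K} (hθ : ∀ t, Measurable (θt t))
    {r : Fin T → Ω → ℝ} {a : Fin T → Ω → Fin d → ℝ}
    (hra : ∀ t, Measurable fun ω => (r t ω, a t ω)) {Rmax : ℝ}
    (hr : ∀ t ω, r t ω ∈ Set.Icc 0 Rmax) (ha : ∀ t ω, 0 ≤ a t ω)
    {x : Fin T → Ω → ℝ} (hxm : ∀ t, Measurable (x t)) (hx : ∀ t ω, x t ω ∈ Set.Icc 0 1)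
    (hlaw : ∀ t θ, μ (θt t ⁻¹' {θ}) ≠ 0 →
      (μ[|θt t ⁻¹' {θ}]).map (fun ω => (r t ω, a t ω)) = D θ)
    {b : Fin d → ℝ} (hbudget : ∀ᵐ ω ∂μ, ∀ i, ∑ t, a t ω i * x t ω ≤ T * b i)
    {p : Fin d → ℝ} (hp : 0 ≤ p) :
    ∫ ω, ∑ t, r t ω * x t ω ∂μ ≤ T * (∑ i, p i * b i + ⨆ θ, surplus (D θ) p) := by
  have hrx_int : ∀ t, Integrable (fun ω => r t ω * x t ω) μ := fun t =>
    .of_bound ((measurable_fst.comp (hra t)).mul (hxm t)).aestronglyMeasurable Rmax <|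
      .of_forall fun ω => by
        rw [Real.norm_eq_abs, abs_mul, abs_of_nonneg (hr t ω).1, abs_of_nonneg (hx t ω).1]
        exact (mul_le_of_le_one_right (hr t ω).1 (hx t ω).2).trans (hr t ω).2
  have hsurplus_int : ∀ t, Integrable (fun ω => surplusIntegrand p (r t ω, a t ω)) μ := fun t =>
    .of_bound ((measurable_surplusIntegrand p).comp (hra t)).aestronglyMeasurable Rmax <|
      .of_forall fun ω => by
        rw [Real.norm_eq_abs, abs_of_nonneg (surplusIntegrand_nonneg _ _)]
        exact (surplusIntegrand_le hp (ha t ω)).trans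
          (max_le (hr t ω).2 ((hr t ω).1.trans (hr t ω).2))
  calc ∫ ω, ∑ t, r t ω * x t ω ∂μ
      ≤ ∫ ω, (∑ t, surplusIntegrand p (r t ω, a t ω) + ∑ i, p i * (T * b i)) ∂μ :=
        integral_mono_ae (integrable_finsetSum _ fun t _ => hrx_int t)
          ((integrable_finsetSum _ fun t _ => hsurplus_int t).add (integrable_const _))
          (hbudget.mono fun ω hω => sum_mul_le_sum_surplusIntegrand_add _ _ (hx · ω) hp hω)
    _ = ∑ t, ∫ ω, surplusIntegrand p (r t ω, a t ω) ∂μ + T * ∑ i, p i * b i := by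
        rw [integral_add (integrable_finsetSum _ fun t _ => hsurplus_int t) (integrable_const _),
          integral_finsetSum _ fun t _ => hsurplus_int t, integral_const, Finset.mul_sum]
        simp_rw [mul_left_comm]
        simp
    _ ≤ ∑ _t : Fin T, (⨆ θ, surplus (D θ) p) + T * ∑ i, p i * b i := by
        gcongr with t
        exact integral_comp_le_iSup_of_map_cond_eq (hθ t) (hra t) (measurable_surplusIntegrand p)
          (hsurplus_int t) (hlaw t)
    _ = T * (∑ i, p i * b i + ⨆ θ, surplus (D θ) p) := by
        rw [Finset.sum_const, Finset.card_univ, Fintype.card_fin, nsmul_eq_mul]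
        ring

theorem stmt3_general (K T d : ℕ)
    (Rmax Amax : ℝ) (hR : 0 < Rmax)
    (D : Fin K → Measure (ℝ × (Fin d → ℝ)))
    (b : Fin d → ℝ) (hb : ∀ i, 0 < b i)
    (bmin : ℝ) (hbmin : IsLeast (Set.range b) bmin)
    (Pmax : ℝ) (hP : 2 * Rmax / bmin ≤ Pmax)
    (Ω : Type*) [MeasurableSpace Ω] (μ : Measure Ω) [IsProbabilityMeasure μ]
    (θt : Fin T → Ω → Fin K) (hθmeas : ∀ t, Measurable (θt t))
    (r : Fin T → Ω → ℝ) (a : Fin T → Ω → Fin d → ℝ)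
    (hrameas : ∀ t, Measurable (fun ω => (r t ω, a t ω)))
    (hrange : ∀ t ω, 0 ≤ r t ω ∧ r t ω ≤ Rmax ∧ ∀ i, 0 ≤ a t ω i ∧ a t ω i ≤ Amax)
    (x : Fin T → Ω → ℝ) (hxmeas : ∀ t, Measurable (x t))
    (hx01 : ∀ t ω, x t ω = 0 ∨ x t ω = 1)
    (hlaw : ∀ t θ, μ {ω | θt t ω = θ} ≠ 0 →
      Measure.map (fun ω => (r t ω, a t ω)) (ProbabilityTheory.cond μ {ω | θt t ω = θ})
        = D θ)
    (hbudget : ∀ᵐ ω ∂μ, ∀ i, ∑ t, a t ω i * x t ω ≤ T * b i) :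
    (∫ ω, ∑ t, r t ω * x t ω ∂μ)
      ≤ T * sInf ((fun p => (∑ i, p i * b i) + sSup (Set.range fun θ => surplus (D θ) p)) ''
          {p : Fin d → ℝ | ∀ i, p i ∈ Set.Icc 0 Pmax}) := by
  have hPmax : 0 ≤ Pmax := by
    obtain ⟨i, hi⟩ := hbmin.1
    exact (div_nonneg (by positivity) (hi ▸ (hb i).le)).trans hP
  have hx : ∀ t ω, x t ω ∈ Set.Icc (0 : ℝ) 1 := fun t ω => by
    rcases hx01 t ω with h | h <;> simp [h]
  rw [← smul_eq_mul, ← Real.sInf_smul_of_nonneg T.cast_nonneg]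
  refine le_csInf ((Set.nonempty_of_mem fun _ => ⟨le_rfl, hPmax⟩).image _).smul_set ?_
  rintro _ ⟨_, ⟨p, hp, rfl⟩, rfl⟩
  exact integral_sum_mul_le_mul_add_iSup_surplus hθmeas hrameas
    (fun t ω => ⟨(hrange t ω).1, (hrange t ω).2.1⟩) (fun t ω i => ((hrange t ω).2.2 i).1)
    hxmeas hx hlaw hbudget fun i => (hp i).1

/-- switching-aware oracle upper bound.  For any online policy (any random
variables `θ_t, (r_t, a_t), x_t` such that the conditional law of `(r_t,a_t)` given
`θ_t = θ` is `D_θ`) satisfying the pathwise budget constraint `∑_t a_t x_t ≤ T·b`,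
`E[∑_t r_t x_t] ≤ T · V^mix(b)` where
`V^mix(b) = min_{p ∈ 𝒫} (⟨p,b⟩ + max_θ g_θ(p))`. -/
theorem stmt3 (K T d : ℕ) (hK : 1 ≤ K) (hT : 1 ≤ T) (hd : 1 ≤ d)
    (Rmax Amax : ℝ) (hR : 0 < Rmax) (hA : 0 < Amax)
    (D : Fin K → Measure (ℝ × (Fin d → ℝ)))
    (hDp : ∀ θ, IsProbabilityMeasure (D θ))
    (hDs : ∀ θ, ∀ᵐ z ∂ D θ, 0 ≤ z.1 ∧ z.1 ≤ Rmax ∧ ∀ i, 0 ≤ z.2 i ∧ z.2 i ≤ Amax)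
    (b : Fin d → ℝ) (hb : ∀ i, 0 < b i)
    (bmin : ℝ) (hbmin : IsLeast (Set.range b) bmin)
    (Pmax : ℝ) (hP : 2 * Rmax / bmin ≤ Pmax)
    (Ω : Type*) [MeasurableSpace Ω] (μ : Measure Ω) [IsProbabilityMeasure μ]
    (θt : Fin T → Ω → Fin K) (hθmeas : ∀ t, Measurable (θt t))
    (r : Fin T → Ω → ℝ) (a : Fin T → Ω → Fin d → ℝ)
    (hrameas : ∀ t, Measurable (fun ω => (r t ω, a t ω)))
    (hrange : ∀ t ω, 0 ≤ r t ω ∧ r t ω ≤ Rmax ∧ ∀ i, 0 ≤ a t ω i ∧ a t ω i ≤ Amax)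
    (x : Fin T → Ω → ℝ) (hxmeas : ∀ t, Measurable (x t))
    (hx01 : ∀ t ω, x t ω = 0 ∨ x t ω = 1)
    (hlaw : ∀ t θ, μ {ω | θt t ω = θ} ≠ 0 →
      Measure.map (fun ω => (r t ω, a t ω)) (ProbabilityTheory.cond μ {ω | θt t ω = θ})
        = D θ)
    (hbudget : ∀ᵐ ω ∂μ, ∀ i, ∑ t, a t ω i * x t ω ≤ T * b i) :
    (∫ ω, ∑ t, r t ω * x t ω ∂μ)
      ≤ T * sInf ((fun p => (∑ i, p i * b i) + sSup (Set.range fun θ => surplus (D θ) p)) ''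
          {p : Fin d → ℝ | ∀ i, p i ∈ Set.Icc 0 Pmax}) :=
  stmt3_general K T d Rmax Amax hR D b hb bmin hbmin Pmax hP Ω μ θt hθmeas r a hrameas hrange x
    hxmeas hx01 hlaw hbudget
end

section
/- Fix d ≥ 1, a coordinate i ∈ {1,…,d}, and P_max > 0, and consider the function class F_i := { f_p : p ∈ [0,P_max]^d } where f_p(r, a) := a_i · 1{r > ⟨p, a⟩} for (r, a) ∈ ℝ_{≥0} × ℝ_{≥0}^d. Then F_i cannot pseudo-shatter any set of d+3 points: there do not exist points z_1,…,z_{d+3} ∈ ℝ_{≥0} × ℝ_{≥0}^d and thresholds s_1,…,s_{d+3} ∈ ℝ such that for every subset S ⊆ {1,…,d+3} there exists p ∈ [0,P_max]^d with f_p(z_j) > s_j if and only if j ∈ S. -/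
/-- the class `F_i = {(r,a) ↦ a_i · 1{r > ⟨p,a⟩} : p ∈ [0,P_max]^d}` cannot
pseudo-shatter any `d+3` points: there are no points `z_1,…,z_{d+3}` (with nonnegative
coordinates) and thresholds `s_1,…,s_{d+3}` such that every subset `S ⊆ {1,…,d+3}` is
realized as `{j : f_p(z_j) > s_j}` for some `p` in the box.  Hence `Pdim(F_i) ≤ d+2`. -/
theorem stmt13 (d : ℕ) (hd : 1 ≤ d) (i : Fin d) (Pmax : ℝ) (hP : 0 < Pmax) :
    ¬ ∃ (z : Fin (d + 3) → ℝ × (Fin d → ℝ)) (s : Fin (d + 3) → ℝ),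
        (∀ j, 0 ≤ (z j).1 ∧ ∀ k, 0 ≤ (z j).2 k) ∧
        ∀ S : Finset (Fin (d + 3)), ∃ p : Fin d → ℝ,
          (∀ k, p k ∈ Set.Icc 0 Pmax) ∧
          ∀ j, ((z j).2 i * (if (∑ k, p k * (z j).2 k) < (z j).1 then 1 else 0) > s j
                  ↔ j ∈ S) := by
  classical
  rintro ⟨z, s, hnn, hsh⟩
  -- From the empty set and the full set, the two possible function values must
  -- straddle the threshold at each point.
  obtain ⟨p0, hp0box, hp0⟩ := hsh ∅
  obtain ⟨p1, hp1box, hp1⟩ := hsh Finset.univ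
  have hdiff : ∀ j, ((z j).2 i > s j) ↔ ¬ ((0:ℝ) > s j) := by
    intro j
    have h0 := hp0 j
    have h1 := hp1 j
    simp only [Finset.notMem_empty, iff_false, Finset.mem_univ, iff_true] at h0 h1
    constructor
    · intro hc h0s
      apply h0
      by_cases hcond : (∑ k, p0 k * (z j).2 k) < (z j).1 <;>
        simp [hcond] <;> [exact hc; exact h0s]
    · intro h0s
      by_contra hc
      by_cases hcond : (∑ k, p1 k * (z j).2 k) < (z j).1 <;>
        simp [hcond] at h1 <;> [exact hc h1; exact h0s h1]
  -- d+3 vectors in a (d+1)-dimensional space are linearly dependent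
  set v : Fin (d+3) → (Fin d → ℝ) × ℝ := fun j => ((z j).2, (z j).1) with hv
  have hnotli : ¬ LinearIndependent ℝ v := by
    intro hli
    have h := hli.fintype_card_le_finrank
    simp [Module.finrank_prod, Module.finrank_pi] at h
  obtain ⟨g, hg, j0, hj0⟩ := (Fintype.not_linearIndependent_iff).1 hnotli
  -- normalize so that some coefficient is positive
  set lam : Fin (d+3) → ℝ := if 0 < g j0 then g else -g with hlam
  have hlamsum : ∑ j, lam j • v j = 0 := by
    by_cases h : 0 < g j0
    · simpa [hlam, h] using hg
    · simp only [hlam, if_neg h]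
      have : ∑ j, (-g) j • v j = - ∑ j, g j • v j := by
        simp [neg_smul, Finset.sum_neg_distrib]
      rw [this, hg, neg_zero]
  have hj0pos : 0 < lam j0 := by
    by_cases h : 0 < g j0
    · simpa [hlam, h]
    · have : g j0 < 0 := lt_of_le_of_ne (not_lt.1 h) hj0
      simp only [hlam, if_neg h, Pi.neg_apply]
      linarith
  -- the components of the dependence
  have hsum1 : ∀ k, ∑ j, lam j * (z j).2 k = 0 := by
    intro k
    have h1 := congrArg Prod.fst hlamsum
    rw [Prod.fst_sum] at h1
    have h2 := congrFun h1 k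
    simpa [Finset.sum_apply, hv] using h2
  have hsum2 : ∑ j, lam j * (z j).1 = 0 := by
    have h1 := congrArg Prod.snd hlamsum
    rw [Prod.snd_sum] at h1
    simpa [hv] using h1
  -- the subset that cannot be realized
  set S : Finset (Fin (d+3)) :=
    Finset.univ.filter (fun j => (0 < lam j) ↔ ((z j).2 i > s j)) with hS
  obtain ⟨p, hpbox, hp⟩ := hsh S
  have hmem : ∀ j, j ∈ S ↔ ((0 < lam j) ↔ ((z j).2 i > s j)) := by
    intro j; simp [hS]
  have key : ∀ j, 0 < lam j → (∑ k, p k * (z j).2 k) < (z j).1 := by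
    intro j hlj
    by_contra hcond
    have hpj := hp j
    simp only [if_neg hcond, mul_zero] at hpj
    by_cases hc : (z j).2 i > s j
    · have hjS : j ∈ S := (hmem j).2 (by simp [hlj, hc])
      have := hpj.2 hjS
      exact (hdiff j).1 hc this
    · have hjS : j ∉ S := by
        rw [hmem j]; simp [hlj, hc]
      have h0s : (0:ℝ) > s j := by
        by_contra h; exact hc ((hdiff j).2 h)
      exact hjS (hpj.1 h0s)
  have key2 : ∀ j, lam j < 0 → ¬ ((∑ k, p k * (z j).2 k) < (z j).1) := by
    intro j hlj hcond
    have hpj := hp j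
    simp only [if_pos hcond, mul_one] at hpj
    have hnp : ¬ (0 < lam j) := by linarith
    by_cases hc : (z j).2 i > s j
    · have hjS : j ∉ S := by
        rw [hmem j]; simp [hnp, hc]
      exact hjS (hpj.1 hc)
    · have hjS : j ∈ S := (hmem j).2 (by simp [hnp, hc])
      exact hc (hpj.2 hjS)
  -- derive the contradiction
  have hterm : ∀ j, lam j * ((∑ k, p k * (z j).2 k) - (z j).1) ≤ 0 := by
    intro j
    rcases lt_trichotomy (lam j) 0 with h | h | h
    · have := key2 j h
      have : (0:ℝ) ≤ (∑ k, p k * (z j).2 k) - (z j).1 := by linarith [not_lt.1 this]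
      nlinarith
    · simp [h]
    · have := key j h
      nlinarith
  have hstrict : lam j0 * ((∑ k, p k * (z j0).2 k) - (z j0).1) < 0 := by
    have := key j0 hj0pos
    nlinarith
  have hsumlt : ∑ j, lam j * ((∑ k, p k * (z j).2 k) - (z j).1) < 0 := by
    have := Finset.sum_lt_sum (f := fun j => lam j * ((∑ k, p k * (z j).2 k) - (z j).1))
      (g := fun _ => (0:ℝ)) (fun j _ => hterm j) ⟨j0, Finset.mem_univ j0, hstrict⟩
    simpa using this
  have hsumeq : ∑ j, lam j * ((∑ k, p k * (z j).2 k) - (z j).1) = 0 := by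
    have e1 : ∑ j, lam j * ((∑ k, p k * (z j).2 k) - (z j).1)
        = (∑ j, lam j * ∑ k, p k * (z j).2 k) - ∑ j, lam j * (z j).1 := by
      rw [← Finset.sum_sub_distrib]
      congr 1; ext j; ring
    have e2 : ∑ j, lam j * ∑ k, p k * (z j).2 k = 0 := by
      have : ∑ j, lam j * ∑ k, p k * (z j).2 k
          = ∑ k, p k * ∑ j, lam j * (z j).2 k := by
        simp_rw [Finset.mul_sum]
        rw [Finset.sum_comm]
        exact Finset.sum_congr rfl fun k _ => Finset.sum_congr rfl fun j _ => by ring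
      rw [this]
      simp [hsum1]
    rw [e1, e2, hsum2, sub_zero]
  linarith
end

section
/- Let (M_t)_{t=0}^T be a martingale on a probability space with respect to a filtration, with M_0 = 0 and increments bounded almost surely by |M_t − M_{t−1}| ≤ A_max for all 1 ≤ t ≤ T, where A_max > 0. Then E[ max_{0 ≤ t ≤ T} (M_t)_+ ] ≤ A_max · sqrt(π T / 2). -/
/-!
For `s ≥ 0` the process `exp (s * M k)` is a nonnegative submartingale. Since `x ↦ exp (s * x)`
lies below its chord on `[-A, A]`, an increment bounded by `A` with vanishing conditional mean has
conditional moment generating function at most `cosh (s * A) ≤ exp (s ^ 2 * A ^ 2 / 2)`, so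
`E[exp (s * M T)] ≤ exp (T * s ^ 2 * A ^ 2 / 2)`. Doob's maximal inequality with
`s = λ / (T * A ^ 2)` gives the Gaussian tail `P(max_{t ≤ T} M t > λ) ≤ exp (-λ ^ 2 / (2 T A ^ 2))`,
and integrating the tail over `λ > 0` gives `A * √(π T / 2)`. The martingale is first stopped at
`T`, so that the increment bound holds at all times.
-/

open MeasureTheory Real

lemma Real.exp_mul_le_cosh_add_sinh_div_mul {A s x : ℝ} (hA : 0 < A) (hx : |x| ≤ A) :
    exp (s * x) ≤ cosh (s * A) + sinh (s * A) / A * x := by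
  obtain ⟨hxl, hxu⟩ := abs_le.mp hx
  have hconv := convexOn_exp.2 (Set.mem_univ (s * A)) (Set.mem_univ (-(s * A)))
    (div_nonneg (by linarith : 0 ≤ A + x) (by positivity : 0 ≤ 2 * A))
    (div_nonneg (by linarith : 0 ≤ A - x) (by positivity : 0 ≤ 2 * A))
    (by field_simp; ring)
  have harg : (A + x) / (2 * A) * (s * A) + (A - x) / (2 * A) * -(s * A) = s * x := by
    field_simp; ring
  simp only [smul_eq_mul, harg] at hconv
  refine hconv.trans_eq ?_
  rw [cosh_eq, sinh_eq]
  field_simp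
  ring

namespace MeasureTheory

variable {Ω : Type*} {m m0 : MeasurableSpace Ω} {μ : Measure Ω}

lemma integrable_exp_mul_of_ae_abs_le [IsFiniteMeasure μ] {f : Ω → ℝ}
    (hf : AEStronglyMeasurable f μ) {C : ℝ} (hC : ∀ᵐ ω ∂μ, |f ω| ≤ C) (s : ℝ) :
    Integrable (fun ω => exp (s * f ω)) μ := by
  refine .of_bound (continuous_exp.comp_aestronglyMeasurable (hf.const_mul s)) (exp (|s| * C)) ?_
  filter_upwards [hC] with ω hω
  rw [norm_eq_abs, abs_exp, exp_le_exp]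
  calc s * f ω ≤ |s * f ω| := le_abs_self _
    _ = |s| * |f ω| := abs_mul _ _
    _ ≤ |s| * C := mul_le_mul_of_nonneg_left hω (abs_nonneg s)

lemma integrable_finset_sup' {ι β : Type*} [NormedAddCommGroup β] [Lattice β]
    [HasSolidNorm β] [IsOrderedAddMonoid β] {s : Finset ι} (hs : s.Nonempty) {f : ι → Ω → β} (hf : ∀ i ∈ s, Integrable (f i) μ) :
    Integrable (fun ω => s.sup' hs fun i => f i ω) μ := by
  have hsup : (fun ω => s.sup' hs fun i => f i ω) = s.sup' hs f :=
    funext fun ω => (Finset.sup'_apply hs f ω).symm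
  rw [hsup]
  exact Finset.sup'_induction (p := fun g => Integrable g μ) hs f (fun _ h₁ _ h₂ => h₁.sup h₂) hf

lemma integral_le_of_measureReal_lt_le_exp_neg_mul_sq {X : Ω → ℝ} (hX : Integrable X μ)
    (hX0 : 0 ≤ᵐ[μ] X) {b : ℝ} (hb : 0 < b)
    (htail : ∀ t, 0 < t → μ.real {ω | t < X ω} ≤ exp (-b * t ^ 2)) :
    ∫ ω, X ω ∂μ ≤ √(π / b) / 2 := by
  rw [hX.integral_eq_integral_meas_lt hX0, ← integral_gaussian_Ioi]
  refine integral_mono_of_nonneg (.of_forall fun t => measureReal_nonneg)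
    (integrable_exp_neg_mul_sq hb).integrableOn ?_
  rw [Filter.EventuallyLE, ae_restrict_iff' measurableSet_Ioi]
  exact .of_forall htail

section CondExp

variable [IsFiniteMeasure μ] {D : Ω → ℝ}

lemma condExp_const_add_smul_ae_eq (hm : m ≤ m0) (hD : Integrable D μ) (hD0 : μ[D|m] =ᵐ[μ] 0)
    (c a : ℝ) : μ[(fun _ => c) + a • D|m] =ᵐ[μ] fun _ => c := by
  filter_upwards [condExp_add (integrable_const c) (hD.smul a) m, condExp_smul a D m, hD0]
    with ω hadd hsmul hzero
  simp [hadd, hsmul, hzero, condExp_const hm]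

lemma condExp_exp_mul_le_cosh (hm : m ≤ m0) (hD : Integrable D μ) (hD0 : μ[D|m] =ᵐ[μ] 0)
    {A : ℝ} (hA : 0 < A) (hDA : ∀ᵐ ω ∂μ, |D ω| ≤ A) (s : ℝ) :
    μ[fun ω => exp (s * D ω)|m] ≤ᵐ[μ] fun _ => cosh (s * A) := by
  have hchord :
      (fun ω => exp (s * D ω)) ≤ᵐ[μ] (fun _ => cosh (s * A)) + (sinh (s * A) / A) • D := by
    filter_upwards [hDA] with ω hω using exp_mul_le_cosh_add_sinh_div_mul hA hω
  exact (condExp_mono (integrable_exp_mul_of_ae_abs_le hD.1 hDA s)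
    ((integrable_const _).add (hD.smul _)) hchord).trans
    (condExp_const_add_smul_ae_eq hm hD hD0 _ _).le

lemma one_le_condExp_exp_mul (hm : m ≤ m0) (hD : Integrable D μ) (hD0 : μ[D|m] =ᵐ[μ] 0) {s : ℝ}
    (hexp : Integrable (fun ω => exp (s * D ω)) μ) :
    1 ≤ᵐ[μ] μ[fun ω => exp (s * D ω)|m] := by
  have htangent : (fun _ => (1 : ℝ)) + s • D ≤ᵐ[μ] fun ω => exp (s * D ω) :=
    .of_forall fun ω => by simpa [add_comm] using add_one_le_exp (s * D ω)
  exact (condExp_const_add_smul_ae_eq hm hD hD0 1 s).symm.le.trans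
    (condExp_mono ((integrable_const _).add (hD.smul _)) hexp htangent)

end CondExp

variable {ℱ : Filtration ℕ m0} {M : ℕ → Ω → ℝ} {A : ℝ}

lemma ae_abs_le_mul_of_abs_sub_succ_le (h0 : M 0 =ᵐ[μ] 0)
    (hinc : ∀ k, ∀ᵐ ω ∂μ, |M (k + 1) ω - M k ω| ≤ A) (k : ℕ) :
    ∀ᵐ ω ∂μ, |M k ω| ≤ k * A := by
  induction k with
  | zero => filter_upwards [h0] with ω hω using by simp [hω]
  | succ k ih =>
    filter_upwards [ih, hinc k] with ω hk hstep
    calc |M (k + 1) ω| = |M k ω + (M (k + 1) ω - M k ω)| := by ring_nf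
      _ ≤ |M k ω| + |M (k + 1) ω - M k ω| := abs_add_le _ _
      _ ≤ (k + 1 : ℕ) * A := by push_cast; linarith

lemma ae_abs_sub_succ_min_le {T : ℕ} (hA : 0 ≤ A)
    (hinc : ∀ t, 1 ≤ t → t ≤ T → ∀ᵐ ω ∂μ, |M t ω - M (t - 1) ω| ≤ A) (k : ℕ) :
    ∀ᵐ ω ∂μ, |M (min (k + 1) T) ω - M (min k T) ω| ≤ A := by
  rcases le_or_gt (k + 1) T with hk | hk
  · rw [min_eq_left hk, min_eq_left (by omega)]
    simpa using hinc (k + 1) (by omega) hk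
  · rw [min_eq_right hk.le, min_eq_right (by omega)]
    exact .of_forall fun ω => by simpa using hA

namespace Martingale

lemma condExp_sub_succ_ae_eq_zero [SigmaFiniteFiltration μ ℱ] (hM : Martingale M ℱ μ) (k : ℕ) :
    μ[M (k + 1) - M k|ℱ k] =ᵐ[μ] 0 := by
  filter_upwards [condExp_sub (hM.integrable (k + 1)) (hM.integrable k) (ℱ k),
    hM.condExp_ae_eq k.le_succ] with ω hsub hsucc
  simp [hsub, hsucc,
    condExp_of_stronglyMeasurable (ℱ.le k) (hM.stronglyAdapted k) (hM.integrable k)]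

lemma min_const [SigmaFiniteFiltration μ ℱ] (hM : Martingale M ℱ μ) (T : ℕ) :
    Martingale (fun k => M (min k T)) ℱ μ := by
  refine ⟨fun k => (hM.stronglyAdapted _).mono (ℱ.mono (min_le_left k T)), fun i j hij => ?_⟩
  show μ[M (min j T)|ℱ i] =ᵐ[μ] M (min i T)
  rcases le_total i T with hiT | hTi
  · rw [min_eq_left hiT]
    exact hM.condExp_ae_eq (le_min hij hiT)
  · rw [min_eq_right hTi, min_eq_right (hTi.trans hij)]
    exact (condExp_of_stronglyMeasurable (ℱ.le i) ((hM.stronglyAdapted T).mono (ℱ.mono hTi))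
      (hM.integrable T)).eventuallyEq

lemma integrable_exp_mul [IsFiniteMeasure μ] (hM : Martingale M ℱ μ) (h0 : M 0 =ᵐ[μ] 0)
    (hinc : ∀ k, ∀ᵐ ω ∂μ, |M (k + 1) ω - M k ω| ≤ A) (s : ℝ) (k : ℕ) :
    Integrable (fun ω => exp (s * M k ω)) μ :=
  integrable_exp_mul_of_ae_abs_le (hM.integrable k).1 (ae_abs_le_mul_of_abs_sub_succ_le h0 hinc k) s

lemma condExp_exp_mul_succ_ae_eq [IsFiniteMeasure μ] (hM : Martingale M ℱ μ) (h0 : M 0 =ᵐ[μ] 0)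
    (hinc : ∀ k, ∀ᵐ ω ∂μ, |M (k + 1) ω - M k ω| ≤ A) (s : ℝ) (k : ℕ) :
    μ[fun ω => exp (s * M (k + 1) ω)|ℱ k] =ᵐ[μ]
      fun ω => exp (s * M k ω) * μ[fun ω => exp (s * (M (k + 1) - M k) ω)|ℱ k] ω := by
  have hsplit : (fun ω => exp (s * M (k + 1) ω))
      = (fun ω => exp (s * M k ω)) * fun ω => exp (s * (M (k + 1) - M k) ω) := by
    funext ω
    simp only [Pi.mul_apply, Pi.sub_apply, ← exp_add]
    ring_nf
  rw [hsplit]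
  refine condExp_mul_of_stronglyMeasurable_left
    (continuous_exp.comp_stronglyMeasurable ((hM.stronglyAdapted k).const_mul s)) ?_
    (integrable_exp_mul_of_ae_abs_le ((hM.integrable _).sub (hM.integrable _)).1 (hinc k) s)
  rw [← hsplit]
  exact hM.integrable_exp_mul h0 hinc s (k + 1)

lemma submartingale_exp_mul [IsFiniteMeasure μ] (hM : Martingale M ℱ μ) (h0 : M 0 =ᵐ[μ] 0)
    (hinc : ∀ k, ∀ᵐ ω ∂μ, |M (k + 1) ω - M k ω| ≤ A) (s : ℝ) :
    Submartingale (fun k ω => exp (s * M k ω)) ℱ μ := by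
  refine submartingale_nat
    (fun k => continuous_exp.comp_stronglyMeasurable ((hM.stronglyAdapted k).const_mul s))
    (hM.integrable_exp_mul h0 hinc s) fun k => ?_
  have hD := (hM.integrable (k + 1)).sub (hM.integrable k)
  filter_upwards [hM.condExp_exp_mul_succ_ae_eq h0 hinc s k,
    one_le_condExp_exp_mul (ℱ.le k) hD (hM.condExp_sub_succ_ae_eq_zero k)
      (integrable_exp_mul_of_ae_abs_le hD.1 (hinc k) s)] with ω hpull hone
  rw [hpull]
  exact le_mul_of_one_le_right (exp_pos _).le hone

lemma integral_exp_mul_le_cosh_pow [IsProbabilityMeasure μ] (hM : Martingale M ℱ μ)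
    (h0 : M 0 =ᵐ[μ] 0) (hA : 0 < A) (hinc : ∀ k, ∀ᵐ ω ∂μ, |M (k + 1) ω - M k ω| ≤ A)
    (s : ℝ) (n : ℕ) : ∫ ω, exp (s * M n ω) ∂μ ≤ cosh (s * A) ^ n := by
  induction n with
  | zero =>
    have hone : (fun ω => exp (s * M 0 ω)) =ᵐ[μ] fun _ => 1 := h0.mono fun ω hω => by simp [hω]
    simp [integral_congr_ae hone]
  | succ n ih =>
    have hpull := hM.condExp_exp_mul_succ_ae_eq h0 hinc s n
    have hcosh := condExp_exp_mul_le_cosh (ℱ.le n) ((hM.integrable (n + 1)).sub (hM.integrable n))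
      (hM.condExp_sub_succ_ae_eq_zero n) hA (hinc n) s
    calc ∫ ω, exp (s * M (n + 1) ω) ∂μ
        = ∫ ω, exp (s * M n ω) * μ[fun ω => exp (s * (M (n + 1) - M n) ω)|ℱ n] ω ∂μ := by
          rw [← integral_condExp (ℱ.le n)]
          exact integral_congr_ae hpull
      _ ≤ ∫ ω, exp (s * M n ω) * cosh (s * A) ∂μ := by
          refine integral_mono_ae (integrable_condExp.congr hpull)
            ((hM.integrable_exp_mul h0 hinc s n).mul_const _) ?_
          filter_upwards [hcosh] with ω hω
          exact mul_le_mul_of_nonneg_left hω (exp_pos _).le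
      _ = (∫ ω, exp (s * M n ω) ∂μ) * cosh (s * A) := integral_mul_const _ _
      _ ≤ cosh (s * A) ^ n * cosh (s * A) := mul_le_mul_of_nonneg_right ih (cosh_pos _).le
      _ = cosh (s * A) ^ (n + 1) := (pow_succ _ _).symm

open scoped NNReal in
lemma measureReal_lt_sup_le [IsProbabilityMeasure μ] (hM : Martingale M ℱ μ) (h0 : M 0 =ᵐ[μ] 0)
    (hA : 0 < A) (hinc : ∀ k, ∀ᵐ ω ∂μ, |M (k + 1) ω - M k ω| ≤ A) {s l : ℝ} (hs : 0 ≤ s)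
    (hl : 0 ≤ l) (n : ℕ) :
    μ.real {ω | l < (Finset.range (n + 1)).sup' Finset.nonempty_range_add_one
      fun k => max (M k ω) 0} ≤ cosh (s * A) ^ n * exp (-(s * l)) := by
  set ε : ℝ≥0 := ⟨exp (s * l), (exp_pos _).le⟩
  set S := {ω | (ε : ℝ) ≤ (Finset.range (n + 1)).sup' Finset.nonempty_range_add_one
      fun k => exp (s * M k ω)}
  have hsubset : {ω | l < (Finset.range (n + 1)).sup' Finset.nonempty_range_add_one
      fun k => max (M k ω) 0} ⊆ S := by
    intro ω (hω : l < _)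
    obtain ⟨k, hk, hlt⟩ := (Finset.lt_sup'_iff _).1 hω
    have hlM : l < M k ω := (lt_max_iff.1 hlt).resolve_right hl.not_gt
    exact (exp_le_exp.2 (mul_le_mul_of_nonneg_left hlM.le hs)).trans
      (Finset.le_sup' (fun k => exp (s * M k ω)) hk)
  have hdoob : exp (s * l) * μ.real S ≤ ∫ ω in S, exp (s * M n ω) ∂μ := by
    have h := ENNReal.toReal_mono ENNReal.ofReal_ne_top
      (maximal_ineq (hM.submartingale_exp_mul h0 hinc s) (fun k ω => (exp_pos _).le) (ε := ε) n)
    rwa [ENNReal.toReal_mul, ENNReal.coe_toReal,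
      ENNReal.toReal_ofReal (integral_nonneg fun ω => (exp_pos _).le)] at h
  have hmgf : exp (s * l) * μ.real S ≤ cosh (s * A) ^ n :=
    calc exp (s * l) * μ.real S ≤ ∫ ω in S, exp (s * M n ω) ∂μ := hdoob
      _ ≤ ∫ ω, exp (s * M n ω) ∂μ := setIntegral_le_integral
          (hM.integrable_exp_mul h0 hinc s n) (.of_forall fun ω => (exp_pos _).le)
      _ ≤ cosh (s * A) ^ n := hM.integral_exp_mul_le_cosh_pow h0 hA hinc s n
  calc _ ≤ μ.real S := measureReal_mono hsubset
    _ = exp (s * l) * μ.real S * exp (-(s * l)) := by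
        rw [mul_comm (exp _), mul_assoc, ← exp_add, add_neg_cancel, exp_zero, mul_one]
    _ ≤ cosh (s * A) ^ n * exp (-(s * l)) := mul_le_mul_of_nonneg_right hmgf (exp_pos _).le

lemma measureReal_lt_sup_le_exp [IsProbabilityMeasure μ] (hM : Martingale M ℱ μ)
    (h0 : M 0 =ᵐ[μ] 0) (hA : 0 < A) (hinc : ∀ k, ∀ᵐ ω ∂μ, |M (k + 1) ω - M k ω| ≤ A)
    {l : ℝ} (hl : 0 ≤ l) {n : ℕ} (hn : 0 < n) :
    μ.real {ω | l < (Finset.range (n + 1)).sup' Finset.nonempty_range_add_one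
      fun k => max (M k ω) 0} ≤ exp (-(2 * n * A ^ 2)⁻¹ * l ^ 2) := by
  have hn' : (0 : ℝ) < n := Nat.cast_pos.2 hn
  set s := l / (n * A ^ 2)
  calc _ ≤ cosh (s * A) ^ n * exp (-(s * l)) :=
        hM.measureReal_lt_sup_le h0 hA hinc (by positivity) hl n
    _ ≤ exp ((s * A) ^ 2 / 2) ^ n * exp (-(s * l)) := by
        gcongr
        exact cosh_le_exp_half_sq _
    _ = exp (-(2 * n * A ^ 2)⁻¹ * l ^ 2) := by
        rw [← exp_nat_mul, ← exp_add]
        congr 1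
        simp only [s]
        field_simp
        ring

end Martingale

end MeasureTheory

/-- expected maximum of a bounded-increment martingale.  If `(M_t)_{t=0}^T`
is a martingale with `M_0 = 0` and `|M_t − M_{t−1}| ≤ A_max` a.s. for `1 ≤ t ≤ T`, then
`E[max_{0 ≤ t ≤ T} (M_t)₊] ≤ A_max √(π T / 2)`. -/
theorem stmt14 {Ω : Type*} {m : MeasurableSpace Ω} (μ : Measure Ω)
    [IsProbabilityMeasure μ] (ℱ : Filtration ℕ m)
    (T : ℕ) (M : ℕ → Ω → ℝ)
    (hM : Martingale M ℱ μ)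
    (h0 : ∀ ω, M 0 ω = 0)
    (Amax : ℝ) (hA : 0 < Amax)
    (hinc : ∀ t, 1 ≤ t → t ≤ T → ∀ᵐ ω ∂μ, |M t ω - M (t - 1) ω| ≤ Amax) :
    (∫ ω, ((Finset.range (T + 1)).sup' (by simp) fun t => max (M t ω) 0) ∂μ)
      ≤ Amax * Real.sqrt (Real.pi * T / 2) := by
  obtain rfl | hT := Nat.eq_zero_or_pos T
  · simp [h0]
  have hstop : ∀ ω, ((Finset.range (T + 1)).sup' Finset.nonempty_range_add_one
      fun t => max (M t ω) 0) = (Finset.range (T + 1)).sup' Finset.nonempty_range_add_one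
      fun t => max (M (min t T) ω) 0 := fun ω =>
    Finset.sup'_congr _ rfl fun t ht => by rw [min_eq_left (Finset.mem_range_succ_iff.1 ht)]
  calc (∫ ω, ((Finset.range (T + 1)).sup' (by simp) fun t => max (M t ω) 0) ∂μ)
      ≤ √(π / (2 * T * Amax ^ 2)⁻¹) / 2 := by
        refine integral_le_of_measureReal_lt_le_exp_neg_mul_sq
          (integrable_finset_sup' _ fun t _ => (hM.integrable t).pos_part)
          (.of_forall fun ω => (le_max_right (M 0 ω) 0).trans
            (Finset.le_sup' (fun t => max (M t ω) 0) (Finset.mem_range.2 T.succ_pos)))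
          (by positivity) fun l hl => ?_
        simp only [hstop]
        exact (hM.min_const T).measureReal_lt_sup_le_exp (.of_forall h0) hA
          (ae_abs_sub_succ_min_le hA.le hinc) hl.le hT
    _ = Amax * √(π * T / 2) := by
        rw [show π / (2 * T * Amax ^ 2)⁻¹ = (2 * Amax) ^ 2 * (π * T / 2) by field_simp,
          sqrt_mul (by positivity), sqrt_sq (by positivity)]
        ring
end

section
/- Under the setup of the previous statement (continuous ĝ_θ with sup_{p ∈ 𝒫} |ĝ_θ(p) − g_θ(p)| ≤ β_θ for each θ, and V, V̂ defined as there), let w⋆ ∈ Δ_K maximize V over Δ_K and let ŵ ∈ Δ_K maximize V̂ over Δ_K. Then V(w⋆) − V(ŵ) ≤ 2 ∑_{θ=1}^K ŵ_θ β_θ. -/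
open MeasureTheory

/-- per-round mixture-value gap.  Under the optimism setup (continuous
`ĝ_θ` with `sup_{p ∈ 𝒫}|ĝ_θ(p) − g_θ(p)| ≤ β_θ`, and `V`, `V̂` as in Statement 18), if
`w⋆` maximizes `V` over `Δ_K` and `ŵ` maximizes `V̂` over `Δ_K`, then
`V(w⋆) − V(ŵ) ≤ 2 ∑_θ ŵ_θ β_θ`. -/
theorem stmt19 (K d : ℕ) (hK : 1 ≤ K) (hd : 1 ≤ d)
    (Rmax Amax Pmax : ℝ) (hR : 0 < Rmax) (hA : 0 < Amax) (hPm : 0 < Pmax)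
    (D : Fin K → Measure (ℝ × (Fin d → ℝ)))
    (hDp : ∀ θ, IsProbabilityMeasure (D θ))
    (hDs : ∀ θ, ∀ᵐ z ∂ D θ, 0 ≤ z.1 ∧ z.1 ≤ Rmax ∧ ∀ i, 0 ≤ z.2 i ∧ z.2 i ≤ Amax)
    (bsafe : Fin d → ℝ) (hbs : ∀ i, 0 ≤ bsafe i)
    (ghat : Fin K → (Fin d → ℝ) → ℝ)
    (hgc : ∀ θ, ContinuousOn (ghat θ) {p : Fin d → ℝ | ∀ i, p i ∈ Set.Icc 0 Pmax})
    (β : Fin K → ℝ) (hβ : ∀ θ, 0 ≤ β θ)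
    (happrox : ∀ θ, ∀ p : Fin d → ℝ, (∀ i, p i ∈ Set.Icc 0 Pmax) →
      |ghat θ p - surplus (D θ) p| ≤ β θ)
    (V Vhat : (Fin K → ℝ) → ℝ)
    (hV : ∀ w, V w =
      sInf ((fun p => (∑ i, p i * bsafe i) + ∑ θ, w θ * surplus (D θ) p) ''
        {p : Fin d → ℝ | ∀ i, p i ∈ Set.Icc 0 Pmax}))
    (hVhat : ∀ w, Vhat w =
      sInf ((fun p => (∑ i, p i * bsafe i) + ∑ θ, w θ * (ghat θ p + β θ)) ''
        {p : Fin d → ℝ | ∀ i, p i ∈ Set.Icc 0 Pmax}))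
    (wstar : Fin K → ℝ) (hwstar : (∀ θ, 0 ≤ wstar θ) ∧ ∑ θ, wstar θ = 1)
    (hwmax : ∀ w : Fin K → ℝ, (∀ θ, 0 ≤ w θ) ∧ ∑ θ, w θ = 1 → V w ≤ V wstar)
    (what : Fin K → ℝ) (hwhat : (∀ θ, 0 ≤ what θ) ∧ ∑ θ, what θ = 1)
    (hwhatmax : ∀ w : Fin K → ℝ, (∀ θ, 0 ≤ w θ) ∧ ∑ θ, w θ = 1 → Vhat w ≤ Vhat what) :
    V wstar - V what ≤ 2 * ∑ θ, what θ * β θ := by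
  set S : Set (Fin d → ℝ) := {p : Fin d → ℝ | ∀ i, p i ∈ Set.Icc 0 Pmax} with hS
  have hSne : S.Nonempty := ⟨fun _ => 0, fun i => ⟨le_refl 0, le_of_lt hPm⟩⟩
  have hsur : ∀ θ p, 0 ≤ surplus (D θ) p := fun θ p =>
    integral_nonneg (fun z => le_max_right _ _)
  -- pointwise bounds on S
  have hgle : ∀ θ, ∀ p ∈ S, surplus (D θ) p ≤ ghat θ p + β θ := by
    intro θ p hp
    have := happrox θ p hp
    have h1 := (abs_le.mp this).1
    linarith
  have hgle2 : ∀ θ, ∀ p ∈ S, ghat θ p + β θ ≤ surplus (D θ) p + 2 * β θ := by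
    intro θ p hp
    have := happrox θ p hp
    have h1 := (abs_le.mp this).2
    linarith
  -- nonnegativity of the objective functions on S
  have hfnn : ∀ (w : Fin K → ℝ), (∀ θ, 0 ≤ w θ) → ∀ p ∈ S,
      0 ≤ (∑ i, p i * bsafe i) + ∑ θ, w θ * surplus (D θ) p := by
    intro w hw p hp
    have h1 : 0 ≤ ∑ i, p i * bsafe i :=
      Finset.sum_nonneg fun i _ => mul_nonneg (hp i).1 (hbs i)
    have h2 : 0 ≤ ∑ θ, w θ * surplus (D θ) p :=
      Finset.sum_nonneg fun θ _ => mul_nonneg (hw θ) (hsur θ p)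
    linarith
  have hhnn : ∀ (w : Fin K → ℝ), (∀ θ, 0 ≤ w θ) → ∀ p ∈ S,
      0 ≤ (∑ i, p i * bsafe i) + ∑ θ, w θ * (ghat θ p + β θ) := by
    intro w hw p hp
    refine le_trans (hfnn w hw p hp) ?_
    have : ∑ θ, w θ * surplus (D θ) p ≤ ∑ θ, w θ * (ghat θ p + β θ) :=
      Finset.sum_le_sum fun θ _ => mul_le_mul_of_nonneg_left (hgle θ p hp) (hw θ)
    beta_reduce
    linarith
  -- V w ≤ Vhat w for w in the simplex
  have key1 : ∀ (w : Fin K → ℝ), (∀ θ, 0 ≤ w θ) → V w ≤ Vhat w := by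
    intro w hw
    rw [hV, hVhat]
    apply le_csInf ((hSne.image _))
    rintro y ⟨p, hp, rfl⟩
    have h1 : sInf ((fun p => (∑ i, p i * bsafe i) + ∑ θ, w θ * surplus (D θ) p) '' S)
        ≤ (∑ i, p i * bsafe i) + ∑ θ, w θ * surplus (D θ) p :=
      csInf_le ⟨0, by rintro y ⟨q, hq, rfl⟩; exact hfnn w hw q hq⟩ ⟨p, hp, rfl⟩
    refine h1.trans ?_
    have : ∑ θ, w θ * surplus (D θ) p ≤ ∑ θ, w θ * (ghat θ p + β θ) :=
      Finset.sum_le_sum fun θ _ => mul_le_mul_of_nonneg_left (hgle θ p hp) (hw θ)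
    beta_reduce
    linarith
  -- Vhat what ≤ V what + 2 * ∑ what β
  have key2 : Vhat what ≤ V what + 2 * ∑ θ, what θ * β θ := by
    rw [hV, hVhat]
    have hb : BddBelow ((fun p => (∑ i, p i * bsafe i) + ∑ θ, what θ * (ghat θ p + β θ)) '' S) :=
      ⟨0, by rintro y ⟨q, hq, rfl⟩; exact hhnn what hwhat.1 q hq⟩
    rw [← sub_le_iff_le_add]
    apply le_csInf (hSne.image _)
    rintro y ⟨p, hp, rfl⟩
    rw [sub_le_iff_le_add]
    have h1 : sInf ((fun p => (∑ i, p i * bsafe i) + ∑ θ, what θ * (ghat θ p + β θ)) '' S)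
        ≤ (∑ i, p i * bsafe i) + ∑ θ, what θ * (ghat θ p + β θ) :=
      csInf_le hb ⟨p, hp, rfl⟩
    refine h1.trans ?_
    have h2 : ∑ θ, what θ * (ghat θ p + β θ)
        ≤ ∑ θ, what θ * (surplus (D θ) p + 2 * β θ) :=
      Finset.sum_le_sum fun θ _ => mul_le_mul_of_nonneg_left (hgle2 θ p hp) (hwhat.1 θ)
    have h3 : ∑ θ, what θ * (surplus (D θ) p + 2 * β θ)
        = ∑ θ, what θ * surplus (D θ) p + 2 * ∑ θ, what θ * β θ := by
      rw [Finset.mul_sum]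
      rw [← Finset.sum_add_distrib]
      congr 1; ext θ; ring
    beta_reduce
    linarith
  have h4 : V wstar ≤ Vhat wstar := key1 wstar hwstar.1
  have h5 : Vhat wstar ≤ Vhat what := hwhatmax wstar hwstar
  linarith
end
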